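/- arXiv:2308.15275 — 4 statements merged into one kernel-verified Lean document; each statement's English description precedes it below -/
import Mathlib

section
/- Comparison of the ℓ²-height and the ℓ^∞-height: Let K be a number field of degree d, let N ≥ 2, and let x = (x₁,…,x_N) ∈ K^N ∖ {0}. Define H(x) = N(⟨x₁,…,x_N⟩)^{−1} · ∏_{i=1}^{d} √(∑_{j=1}^{N} |σ_i(x_j)|²), H_W(x) = N(⟨x₁,…,x_N⟩)^{−1} · ∏_{i=1}^{d} max_{1≤j≤N} |σ_i(x_j)|, and M(x) = N(x₁)·N(x₂)⋯N(x_N) / N(⟨x₁,…,x_N⟩)^N. Then H(x)² ≥ ( H_W(x)^{2/d} + (N−1)·M(x)^{2/(d(N−1))} / H_W(x)^{2/(d(N−1))} )^{d}. -/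
open scoped BigOperators ENNReal NNReal nonZeroDivisors
open MeasureTheory NumberField NumberField.InfinitePlace NumberField.mixedEmbedding

noncomputable section

namespace Paper

attribute [local instance] Classical.propDecidable

variable (K : Type*) [Field K] [NumberField K]

/-- The degree `d = [K:ℚ]`. -/
abbrev dK : ℕ := Module.finrank ℚ K

/-- The absolute value of the discriminant of `K`. -/
abbrev ΔK : ℕ := (NumberField.discr K).natAbs

/-- The trace quadratic form `Q(x) = Δ_K^{-2/d}·Tr(x·x̄)` on `K_ℝ ≅ ℝ^{r₁} × ℂ^{r₂}`. -/
def qK (x : mixedSpace K) : ℝ :=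
  ((ΔK K : ℝ) ^ (-(2 : ℝ) / (dK K : ℝ))) *
    ((∑ w, x.1 w ^ 2) + 2 * ∑ w, Complex.normSq (x.2 w))

/-- `V(N)`, the volume of the Euclidean unit ball in dimension `N`. -/
def vb (N : ℕ) : ℝ := Real.pi ^ ((N : ℝ) / 2) / Real.Gamma ((N : ℝ) / 2 + 1)

/-- The Lebesgue measure on `K_ℝ` associated with the quadratic form `qK`, i.e. the unique
Haar measure giving the unit ball of `qK` measure `V(d)`. -/
def μKR : Measure (mixedSpace K) :=
  ((ENNReal.ofReal (vb (dK K)) / volume {x : mixedSpace K | qK K x ≤ 1}).toNNReal : ℝ≥0) •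
    (volume : Measure (mixedSpace K))

/-- The Euclidean space `K_ℝ^t`. -/
abbrev EK (t : ℕ) := Fin t → mixedSpace K

/-- The quadratic form on `K_ℝ^t`, the orthogonal sum of `t` copies of `qK`. -/
def QE {t : ℕ} (x : EK K t) : ℝ := ∑ i, qK K (x i)

/-- The origin-centered ball of radius `R` in `K_ℝ^t`. -/
def ballK (t : ℕ) (R : ℝ) : Set (EK K t) := {x | QE K x ≤ R ^ 2}

/-- The Lebesgue measure on `K_ℝ^t`. -/
def μEK (t : ℕ) : Measure (EK K t) := Measure.pi fun _ => μKR K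

/-- Diagonal multiplication action of an element of `K` on `K_ℝ^t`. -/
def actK {t : ℕ} (α : K) (x : EK K t) : EK K t := fun a => mixedEmbedding K α * x a

/-- `α` is a root of unity, i.e. a member of `μ_K`. -/
def IsRootOfUnity (α : K) : Prop := ∃ n : ℕ, 0 < n ∧ α ^ n = 1

/-- `ω_K`, the number of roots of unity of `K`. -/
def ωK : ℕ := Nat.card {x : K // IsRootOfUnity K x}

/-- `N(x)`, the absolute norm of the fractional ideal generated by `x`, that is, the absolute
value of the field norm of `x` (with `N(0) = 0`). -/
def elemNorm (x : K) : ℚ := |Algebra.norm ℚ x|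

/-- The fractional ideal `⟨x₁, …, x_M⟩ = 𝓞_K·x₁ + ⋯ + 𝓞_K·x_M`. -/
def spanFrac {M : ℕ} (α : Fin M → K) : FractionalIdeal (𝓞 K)⁰ K :=
  ∑ i, FractionalIdeal.spanSingleton (𝓞 K)⁰ (α i)

/-- `D(α) = N(𝓞_K + α₁𝓞_K + ⋯ + α_M𝓞_K)⁻¹`, the absolute norm of the denominator ideal
of `α`. -/
def Dden {M : ℕ} (α : Fin M → K) : ℚ :=
  (FractionalIdeal.absNorm (1 + spanFrac K α))⁻¹

/-- `H_∞(α) = ∏_{σ : K → ℂ} max_{1 ≤ j ≤ M} max (1, |σ(α_j)|)`. -/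
def Hinf {M : ℕ} (α : Fin M → K) : ℝ :=
  ∏ σ : K →+* ℂ, (Finset.univ.fold max 1 fun j => ‖σ (α j)‖)

/-- The absolute logarithmic Weil height of `α ∈ K^×`:
`h(α) = (1/d)·(∑_σ log max(1,|σ(α)|) + log N(denominator ideal of α))`. -/
def wHeight (α : K) : ℝ :=
  (1 / (dK K : ℝ)) *
    ((∑ σ : K →+* ℂ, Real.log (max 1 (‖σ α‖))) +
      Real.log (Dden K (fun _ : Fin 1 => α)))



/-- **AM-GM**: `card * (∏ z)^(1/card) ≤ ∑ z` for nonnegative reals. -/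
lemma amgm_aux {ι : Type*} (s : Finset ι) (hs : s.Nonempty) (z : ι → ℝ)
    (hz : ∀ i ∈ s, 0 ≤ z i) :
    (s.card : ℝ) * (∏ i ∈ s, z i) ^ ((s.card : ℝ)⁻¹) ≤ ∑ i ∈ s, z i := by
  have hcard : (0:ℝ) < s.card := by exact_mod_cast hs.card_pos
  have h := Real.geom_mean_le_arith_mean_weighted s (fun _ => (s.card : ℝ)⁻¹) z
    (fun i _ => by positivity) (by simp [Finset.sum_const, mul_inv_cancel₀ hcard.ne']) hz
  rw [Real.finset_prod_rpow s z hz _] at h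
  calc (s.card : ℝ) * (∏ i ∈ s, z i) ^ ((s.card : ℝ)⁻¹)
      ≤ (s.card : ℝ) * ∑ i ∈ s, (s.card : ℝ)⁻¹ * z i := by
        exact mul_le_mul_of_nonneg_left h hcard.le
    _ = ∑ i ∈ s, z i := by
        rw [← Finset.mul_sum, ← mul_assoc, mul_inv_cancel₀ hcard.ne', one_mul]

/-- **Mahler / Minkowski product inequality**:
`((∏ f)^(1/n) + (∏ g)^(1/n))^n ≤ ∏ (f + g)` for nonnegative reals. -/
lemma mahler_aux {ι : Type*} (s : Finset ι) (hs : s.Nonempty) (f g : ι → ℝ)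
    (hf : ∀ i ∈ s, 0 ≤ f i) (hg : ∀ i ∈ s, 0 ≤ g i) :
    ((∏ i ∈ s, f i) ^ ((s.card : ℝ)⁻¹) + (∏ i ∈ s, g i) ^ ((s.card : ℝ)⁻¹)) ^ s.card
      ≤ ∏ i ∈ s, (f i + g i) := by
  have hcard : (0:ℝ) < s.card := by exact_mod_cast hs.card_pos
  set r : ℝ := (s.card : ℝ)⁻¹ with hr_def
  have hr : 0 < r := inv_pos.mpr hcard
  by_cases hz : ∃ i ∈ s, f i + g i = 0
  · obtain ⟨i, hi, hzero⟩ := hz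
    have hfi : f i = 0 := by have := hf i hi; have := hg i hi; linarith
    have hgi : g i = 0 := by have := hf i hi; linarith
    rw [Finset.prod_eq_zero hi hfi, Finset.prod_eq_zero hi hgi, Real.zero_rpow hr.ne',
      add_zero, zero_pow hs.card_pos.ne']
    exact Finset.prod_nonneg fun j hj => add_nonneg (hf j hj) (hg j hj)
  push_neg at hz
  have hpos : ∀ i ∈ s, 0 < f i + g i := fun i hi =>
    lt_of_le_of_ne (add_nonneg (hf i hi) (hg i hi)) (Ne.symm (hz i hi))
  have hP : 0 < ∏ i ∈ s, (f i + g i) := Finset.prod_pos hpos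
  have h1 : ∀ h : ι → ℝ, (∀ i ∈ s, 0 ≤ h i) →
      (∏ i ∈ s, h i) ^ r / (∏ i ∈ s, (f i + g i)) ^ r
        ≤ ∑ i ∈ s, r * (h i / (f i + g i)) := by
    intro h hh
    have hdiv : ∀ i ∈ s, 0 ≤ h i / (f i + g i) := fun i hi =>
      div_nonneg (hh i hi) (hpos i hi).le
    have := Real.geom_mean_le_arith_mean_weighted s (fun _ => r) (fun i => h i / (f i + g i))
      (fun i _ => hr.le) (by simp [Finset.sum_const, hr_def, mul_inv_cancel₀ hcard.ne']) hdiv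
    rw [Real.finset_prod_rpow s _ hdiv r] at this
    have heq : (∏ i ∈ s, h i / (f i + g i)) ^ r
        = (∏ i ∈ s, h i) ^ r / (∏ i ∈ s, (f i + g i)) ^ r := by
      rw [Finset.prod_div_distrib, Real.div_rpow (Finset.prod_nonneg hh) hP.le]
    rw [heq] at this
    simpa using this
  have key : (∏ i ∈ s, f i) ^ r + (∏ i ∈ s, g i) ^ r ≤ (∏ i ∈ s, (f i + g i)) ^ r := by
    have h2 := h1 f hf
    have h3 := h1 g hg
    have h4 : (∑ i ∈ s, r * (f i / (f i + g i))) + ∑ i ∈ s, r * (g i / (f i + g i)) = 1 := by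
      rw [← Finset.sum_add_distrib]
      have he : ∀ i ∈ s, r * (f i / (f i + g i)) + r * (g i / (f i + g i)) = r := by
        intro i hi
        rw [← mul_add, ← add_div, div_self (hpos i hi).ne', mul_one]
      rw [Finset.sum_congr rfl he, Finset.sum_const, nsmul_eq_mul, mul_inv_cancel₀ hcard.ne']
    have h5 : (∏ i ∈ s, f i) ^ r / (∏ i ∈ s, (f i + g i)) ^ r
        + (∏ i ∈ s, g i) ^ r / (∏ i ∈ s, (f i + g i)) ^ r ≤ 1 := by
      calc _ ≤ (∑ i ∈ s, r * (f i / (f i + g i))) + ∑ i ∈ s, r * (g i / (f i + g i)) :=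
            add_le_add h2 h3
        _ = 1 := h4
    rw [← add_div, div_le_one (Real.rpow_pos_of_pos hP r)] at h5
    exact h5
  calc ((∏ i ∈ s, f i) ^ r + (∏ i ∈ s, g i) ^ r) ^ s.card
      ≤ ((∏ i ∈ s, (f i + g i)) ^ r) ^ s.card := by
        apply pow_le_pow_left₀ (add_nonneg (Real.rpow_nonneg (Finset.prod_nonneg hf) r)
          (Real.rpow_nonneg (Finset.prod_nonneg hg) r)) key
    _ = ∏ i ∈ s, (f i + g i) := by
        rw [← Real.rpow_natCast ((∏ i ∈ s, (f i + g i)) ^ r) s.card, ← Real.rpow_mul hP.le,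
          inv_mul_cancel₀ hcard.ne', Real.rpow_one]

/-- The absolute value of the norm is the product of the absolute values of the conjugates. -/
lemma elemNorm_eq_prod_abs (y : K) :
    ((elemNorm K y : ℚ) : ℝ) = ∏ σ : K →+* ℂ, ‖σ y‖ := by
  rw [elemNorm]
  have h := Algebra.norm_eq_prod_embeddings ℚ ℂ (x := y)
  have h2 : ‖(algebraMap ℚ ℂ) (Algebra.norm ℚ y)‖
      = ∏ σ : K →ₐ[ℚ] ℂ, ‖σ y‖ := by rw [h, norm_prod]
  rw [show (algebraMap ℚ ℂ) (Algebra.norm ℚ y) = ((Algebra.norm ℚ y : ℚ) : ℂ) from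
    eq_ratCast _ _] at h2
  rw [Rat.cast_abs]
  rw [show |((Algebra.norm ℚ y : ℚ) : ℝ)| = ‖((Algebra.norm ℚ y : ℚ) : ℂ)‖ by
    rw [Complex.norm_ratCast]]
  rw [h2]
  exact (Fintype.prod_equiv (RingHom.equivRatAlgHom K ℂ) (fun σ : K →+* ℂ => ‖σ y‖)
    (fun φ : K →ₐ[ℚ] ℂ => ‖φ y‖)
    (fun σ => by simp [RingHom.equivRatAlgHom_apply])).symm

/-- `fold max 0` of a nonnegative function on `Fin N`, `N ≥ 2`, is attained and bounds. -/
lemma fold_max_spec_aux (N : ℕ) (hN : 2 ≤ N) (f : Fin N → ℝ) (hf : ∀ j, 0 ≤ f j) :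
    ∃ j₀ : Fin N, f j₀ = Finset.univ.fold max 0 f ∧ ∀ j, f j ≤ Finset.univ.fold max 0 f := by
  have hne : (Finset.univ : Finset (Fin N)).Nonempty := ⟨⟨0, by omega⟩, Finset.mem_univ _⟩
  have hle : ∀ j, f j ≤ Finset.univ.fold max 0 f := fun j =>
    (Finset.le_fold_max (f j)).mpr (Or.inr ⟨j, Finset.mem_univ j, le_rfl⟩)
  obtain ⟨j₀, -, hj₀⟩ := Finset.exists_mem_eq_sup' hne f
  refine ⟨j₀, le_antisymm (hle j₀) ?_, hle⟩
  refine (Finset.fold_max_le _).mpr ⟨?_, fun j _ => hj₀ ▸ Finset.le_sup' f (Finset.mem_univ j)⟩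
  exact hj₀ ▸ (hf j₀).trans (Finset.le_sup' f (Finset.mem_univ j₀))

/-- The span of a nonzero vector is a nonzero fractional ideal, so has positive norm. -/
lemma absNorm_spanFrac_pos {N : ℕ} (x : Fin N → K) (hx : x ≠ 0) :
    0 < FractionalIdeal.absNorm (spanFrac K x) := by
  obtain ⟨j₁, hj₁⟩ : ∃ j, x j ≠ 0 := by
    by_contra h; push_neg at h; exact hx (funext h)
  have hspan : spanFrac K x ≠ 0 := by
    intro h0
    have hle : FractionalIdeal.spanSingleton (𝓞 K)⁰ (x j₁) ≤ spanFrac K x := by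
      rw [spanFrac, ← Finset.add_sum_erase _ _ (Finset.mem_univ j₁), ← FractionalIdeal.sup_eq_add]
      exact le_sup_left
    rw [h0] at hle
    have : FractionalIdeal.spanSingleton (𝓞 K)⁰ (x j₁) = 0 :=
      le_antisymm hle (FractionalIdeal.zero_le _)
    exact hj₁ (FractionalIdeal.spanSingleton_eq_zero_iff.mp this)
  exact lt_of_le_of_ne (FractionalIdeal.absNorm_nonneg _)
    (fun h => hspan (FractionalIdeal.absNorm_eq_zero_iff.mp h.symm))

/-- Comparison of the `ℓ²`-height and the `ℓ^∞`-height on `K^N ∖ {0}`. -/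
theorem l2_height_ge_linf_height (N : ℕ) (hN : 2 ≤ N) (x : Fin N → K) (hx : x ≠ 0) :
    ((FractionalIdeal.absNorm (spanFrac K x) : ℝ)⁻¹ *
        ∏ σ : K →+* ℂ, Real.sqrt (∑ j, ‖σ (x j)‖ ^ 2)) ^ 2 ≥
      (((FractionalIdeal.absNorm (spanFrac K x) : ℝ)⁻¹ *
            ∏ σ : K →+* ℂ, (Finset.univ.fold max 0 fun j => ‖σ (x j)‖)) ^
            ((2 : ℝ) / (dK K : ℝ)) +
          ((N : ℝ) - 1) *
            (((∏ j, elemNorm K (x j) : ℚ) : ℝ) /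
                ((FractionalIdeal.absNorm (spanFrac K x) : ℝ)) ^ N) ^
              ((2 : ℝ) / ((dK K : ℝ) * ((N : ℝ) - 1))) /
            (((FractionalIdeal.absNorm (spanFrac K x) : ℝ)⁻¹ *
                ∏ σ : K →+* ℂ, (Finset.univ.fold max 0 fun j => ‖σ (x j)‖)) ^
              ((2 : ℝ) / ((dK K : ℝ) * ((N : ℝ) - 1))))) ^ (dK K : ℕ) := by
  classical
  -- basic positivity facts
  have hcardEmb : Fintype.card (K →+* ℂ) = dK K := Embeddings.card K ℂ
  have hd : 0 < dK K := hcardEmb ▸ Fintype.card_pos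
  have hdR : (0:ℝ) < (dK K : ℝ) := by exact_mod_cast hd
  have hNe : Nonempty (K →+* ℂ) := Fintype.card_pos_iff.mp (hcardEmb ▸ hd)
  have hNR : (0:ℝ) < (N:ℝ) - 1 := by
    have : (2:ℝ) ≤ (N:ℝ) := by exact_mod_cast hN
    linarith
  obtain ⟨j₁, hj₁⟩ : ∃ j, x j ≠ 0 := by
    by_contra h; push_neg at h; exact hx (funext h)
  -- abbreviations matching the goal
  set nrmR : ℝ := ((FractionalIdeal.absNorm (spanFrac K x) : ℚ) : ℝ) with hnrmR_def
  have hnrm : 0 < nrmR := by rw [hnrmR_def]; exact_mod_cast absNorm_spanFrac_pos K x hx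
  set A : ℝ := nrmR⁻¹ with hA_def
  have hA : 0 < A := inv_pos.mpr hnrm
  set m : (K →+* ℂ) → ℝ := fun σ => Finset.univ.fold max 0 fun j => ‖σ (x j)‖
    with hm_def
  set p : (K →+* ℂ) → ℝ := fun σ => ∏ j, ‖σ (x j)‖ with hp_def
  set S : (K →+* ℂ) → ℝ := fun σ => ∑ j, ‖σ (x j)‖ ^ 2 with hS_def
  have hSnonneg : ∀ σ, 0 ≤ S σ := fun σ => Finset.sum_nonneg fun j _ => sq_nonneg _
  have hm : ∀ σ, 0 < m σ := by
    intro σ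
    have h1 : (0:ℝ) < ‖σ (x j₁)‖ := by
      simpa using (map_ne_zero σ).mpr hj₁
    exact lt_of_lt_of_le h1
      ((Finset.le_fold_max _).mpr (Or.inr ⟨j₁, Finset.mem_univ j₁, le_rfl⟩))
  have hpnonneg : ∀ σ, 0 ≤ p σ := fun σ => Finset.prod_nonneg fun j _ => norm_nonneg _
  set c : (K →+* ℂ) → ℝ := fun σ => (p σ / m σ) ^ ((2:ℝ)/((N:ℝ)-1)) with hc_def
  have hcnonneg : ∀ σ, 0 ≤ c σ := fun σ =>
    Real.rpow_nonneg (div_nonneg (hpnonneg σ) (hm σ).le) _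
  set Pm : ℝ := Finset.univ.prod m with hPm_def
  have hPm : 0 < Pm := Finset.prod_pos fun σ _ => hm σ
  set Pp : ℝ := Finset.univ.prod p with hPp_def
  have hPp : 0 ≤ Pp := Finset.prod_nonneg fun σ _ => hpnonneg σ
  set R : ℝ := Pp / Pm with hR_def
  have hR : 0 ≤ R := div_nonneg hPp hPm.le
  -- cast of the product of element norms
  have hPN : ((∏ j, elemNorm K (x j) : ℚ) : ℝ) = Pp := by
    push_cast
    rw [Finset.prod_congr rfl fun j _ => elemNorm_eq_prod_abs K (x j), Finset.prod_comm]
  -- Step A : per-embedding AM-GM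
  have stepA : ∀ σ : K →+* ℂ, m σ ^ 2 + ((N:ℝ) - 1) * c σ ≤ S σ := by
    intro σ
    obtain ⟨j₀, hj₀, hub⟩ := fold_max_spec_aux N hN (fun j => ‖σ (x j)‖)
      (fun j => norm_nonneg _)
    have hj₀' : ‖σ (x j₀)‖ = m σ := hj₀
    have hcardE : ((Finset.univ.erase j₀).card : ℝ) = (N:ℝ) - 1 := by
      rw [Finset.card_erase_of_mem (Finset.mem_univ _), Finset.card_univ, Fintype.card_fin]
      push_cast [Nat.cast_sub (by omega : 1 ≤ N)]
      ring
    have hEne : (Finset.univ.erase j₀).Nonempty := by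
      rw [← Finset.card_pos, Finset.card_erase_of_mem (Finset.mem_univ _), Finset.card_univ,
        Fintype.card_fin]
      omega
    have hAM := amgm_aux (Finset.univ.erase j₀) hEne (fun j => ‖σ (x j)‖ ^ 2)
      (fun j _ => sq_nonneg _)
    beta_reduce at hAM
    rw [hcardE] at hAM
    have hprodE : ∏ j ∈ Finset.univ.erase j₀, ‖σ (x j)‖ = p σ / m σ := by
      have h := Finset.mul_prod_erase Finset.univ (fun j => ‖σ (x j)‖)
        (Finset.mem_univ j₀)
      beta_reduce at h
      rw [hj₀'] at h
      rw [eq_div_iff (hm σ).ne', mul_comm]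
      exact h
    have hprodE2 : (∏ j ∈ Finset.univ.erase j₀, ‖σ (x j)‖ ^ 2)
        ^ (((N:ℝ) - 1))⁻¹ = c σ := by
      rw [Finset.prod_pow, hprodE, ← Real.rpow_natCast (p σ / m σ) 2,
        ← Real.rpow_mul (div_nonneg (hpnonneg σ) (hm σ).le)]
      rw [hc_def]
      congr 1
    rw [hprodE2] at hAM
    have hsplit : S σ = ‖σ (x j₀)‖ ^ 2
        + ∑ j ∈ Finset.univ.erase j₀, ‖σ (x j)‖ ^ 2 :=
      (Finset.add_sum_erase Finset.univ (fun j => ‖σ (x j)‖ ^ 2)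
        (Finset.mem_univ j₀)).symm
    rw [hsplit, hj₀']
    linarith [hAM]
  -- Step B : Mahler's inequality over the embeddings
  have hun : (Finset.univ : Finset (K →+* ℂ)).Nonempty := Finset.univ_nonempty
  have stepB := mahler_aux Finset.univ hun (fun σ => m σ ^ 2) (fun σ => ((N:ℝ) - 1) * c σ)
    (fun σ _ => sq_nonneg _) (fun σ _ => mul_nonneg hNR.le (hcnonneg σ))
  rw [Finset.card_univ, hcardEmb] at stepB
  have stepB2 : (∏ σ : K →+* ℂ, (m σ ^ 2 + ((N:ℝ) - 1) * c σ)) ≤ ∏ σ : K →+* ℂ, S σ :=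
    Finset.prod_le_prod (fun σ _ => add_nonneg (sq_nonneg _)
      (mul_nonneg hNR.le (hcnonneg σ))) (fun σ _ => stepA σ)
  -- identification of the base of the right-hand side
  have e1 : (∏ σ : K →+* ℂ, m σ ^ 2) ^ ((dK K : ℝ))⁻¹ = Pm ^ ((2:ℝ) / (dK K : ℝ)) := by
    rw [Finset.prod_pow, ← Real.rpow_natCast Pm 2, ← Real.rpow_mul hPm.le]
    congr 1
  have e2 : (∏ σ : K →+* ℂ, (((N:ℝ) - 1) * c σ)) ^ ((dK K : ℝ))⁻¹
      = ((N:ℝ) - 1) * R ^ (((2:ℝ) / ((N:ℝ) - 1)) * ((dK K : ℝ))⁻¹) := by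
    rw [Finset.prod_mul_distrib, Finset.prod_const, Finset.card_univ, hcardEmb]
    have hprodc : (∏ σ : K →+* ℂ, c σ) = R ^ ((2:ℝ) / ((N:ℝ) - 1)) := by
      rw [hc_def, Real.finset_prod_rpow _ _ (fun σ _ => div_nonneg (hpnonneg σ) (hm σ).le) _,
        Finset.prod_div_distrib]
    rw [hprodc, Real.mul_rpow (by positivity) (Real.rpow_nonneg hR _),
      ← Real.rpow_natCast ((N:ℝ) - 1) (dK K), ← Real.rpow_mul hNR.le,
      mul_inv_cancel₀ hdR.ne', Real.rpow_one, Real.rpow_mul hR]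
  have base_eq : (A * Pm) ^ ((2:ℝ) / (dK K : ℝ))
        + ((N:ℝ) - 1) * (((∏ j, elemNorm K (x j) : ℚ) : ℝ) / nrmR ^ N)
            ^ ((2:ℝ) / ((dK K : ℝ) * ((N:ℝ) - 1)))
          / (A * Pm) ^ ((2:ℝ) / ((dK K : ℝ) * ((N:ℝ) - 1)))
      = A ^ ((2:ℝ) / (dK K : ℝ)) * ((∏ σ : K →+* ℂ, m σ ^ 2) ^ ((dK K : ℝ))⁻¹
          + (∏ σ : K →+* ℂ, (((N:ℝ) - 1) * c σ)) ^ ((dK K : ℝ))⁻¹) := by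
    have hMM : ((∏ j, elemNorm K (x j) : ℚ) : ℝ) / nrmR ^ N = Pp * A ^ N := by
      rw [hPN, div_eq_mul_inv, hA_def, inv_pow]
    have hABpos : (0:ℝ) < A * Pm := mul_pos hA hPm
    have hdivq : (Pp * A ^ N) ^ ((2:ℝ) / ((dK K : ℝ) * ((N:ℝ) - 1)))
          / (A * Pm) ^ ((2:ℝ) / ((dK K : ℝ) * ((N:ℝ) - 1)))
        = (Pp * A ^ N / (A * Pm)) ^ ((2:ℝ) / ((dK K : ℝ) * ((N:ℝ) - 1))) := by
      rw [Real.div_rpow (by positivity) hABpos.le]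
    have hquot : Pp * A ^ N / (A * Pm) = A ^ (N - 1) * R := by
      have hA' : A ^ N = A ^ (N - 1) * A := by
        rw [← pow_succ, Nat.sub_add_cancel (by omega : 1 ≤ N)]
      rw [hA', hR_def]
      field_simp
    have hApow : (A ^ (N - 1)) ^ ((2:ℝ) / ((dK K : ℝ) * ((N:ℝ) - 1)))
        = A ^ ((2:ℝ) / (dK K : ℝ)) := by
      rw [← Real.rpow_natCast A (N - 1), ← Real.rpow_mul hA.le]
      congr 1
      rw [Nat.cast_sub (by omega : 1 ≤ N), Nat.cast_one]
      field_simp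
    have hqe : (2:ℝ) / ((dK K : ℝ) * ((N:ℝ) - 1))
        = ((2:ℝ) / ((N:ℝ) - 1)) * ((dK K : ℝ))⁻¹ := by
      field_simp
    rw [hMM, mul_div_assoc, hdivq, hquot, Real.mul_rpow (pow_nonneg hA.le _) hR, hApow, e1, e2,
      Real.mul_rpow hA.le hPm.le, hqe]
    ring
  -- final computation
  rw [ge_iff_le]
  calc ((A * Pm) ^ ((2:ℝ) / (dK K : ℝ))
        + ((N:ℝ) - 1) * (((∏ j, elemNorm K (x j) : ℚ) : ℝ) / nrmR ^ N)
            ^ ((2:ℝ) / ((dK K : ℝ) * ((N:ℝ) - 1)))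
          / (A * Pm) ^ ((2:ℝ) / ((dK K : ℝ) * ((N:ℝ) - 1)))) ^ (dK K)
      = (A ^ ((2:ℝ) / (dK K : ℝ)) * ((∏ σ : K →+* ℂ, m σ ^ 2) ^ ((dK K : ℝ))⁻¹
          + (∏ σ : K →+* ℂ, (((N:ℝ) - 1) * c σ)) ^ ((dK K : ℝ))⁻¹)) ^ (dK K) := by
        rw [base_eq]
    _ = A ^ 2 * ((∏ σ : K →+* ℂ, m σ ^ 2) ^ ((dK K : ℝ))⁻¹
          + (∏ σ : K →+* ℂ, (((N:ℝ) - 1) * c σ)) ^ ((dK K : ℝ))⁻¹) ^ (dK K) := by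
        rw [mul_pow, ← Real.rpow_natCast (A ^ ((2:ℝ) / (dK K : ℝ))) (dK K),
          ← Real.rpow_mul hA.le, div_mul_cancel₀ _ hdR.ne',
          show ((2:ℝ) = ((2:ℕ):ℝ)) by norm_num, Real.rpow_natCast]
    _ ≤ A ^ 2 * ∏ σ : K →+* ℂ, S σ := by
        apply mul_le_mul_of_nonneg_left _ (sq_nonneg A)
        exact le_trans stepB stepB2
    _ = (A * ∏ σ : K →+* ℂ, Real.sqrt (∑ j, ‖σ (x j)‖ ^ 2)) ^ 2 := by
        rw [mul_pow, ← Finset.prod_pow]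
        congr 1
        exact (Finset.prod_congr rfl fun σ _ => Real.sq_sqrt (hSnonneg σ)).symm

end Paper
end
end

section
/- For all integers m ≥ 1 and N ≥ 1, the volume ratio of Euclidean unit balls satisfies V(mN)/V(N)^m = Γ(N/2 + 1)^m / Γ(mN/2 + 1) < (Nπ)^{(m−1)/2} · m^{−(mN+1)/2} · e^{m/(6N)}. -/
open scoped BigOperators ENNReal NNReal nonZeroDivisors
open MeasureTheory NumberField NumberField.InfinitePlace NumberField.mixedEmbedding

noncomputable section

namespace Paper

attribute [local instance] Classical.propDecidable

variable (K : Type*) [Field K] [NumberField K]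

open Real Filter

noncomputable def lg (z : ℝ) : ℝ :=
  Real.log (Real.Gamma (z + 1)) - (z + 1 / 2) * Real.log z + z - Real.log (2 * π) / 2

noncomputable def dd (z : ℝ) : ℝ := (z + 1 / 2) * (Real.log (z + 1) - Real.log z) - 1

noncomputable def Bf (z : ℝ) : ℝ := Real.sqrt (2*π*z) * (z / Real.exp 1) ^ z


lemma f1_deriv (x : ℝ) (hx : 0 < x) (hx1 : x < 1) :
    HasDerivAt (fun y : ℝ => Real.log (1 + y) - Real.log (1 - y) - 2 * y)
      (2 * x ^ 2 / (1 - x ^ 2)) x := by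
  have h1 : (1 : ℝ) + x ≠ 0 := by nlinarith
  have h2 : (1 : ℝ) - x ≠ 0 := by nlinarith
  have h3 : (1 : ℝ) - x ^ 2 ≠ 0 := by nlinarith
  have d1 : HasDerivAt (fun y : ℝ => Real.log (1 + y)) (1 / (1 + x)) x := by
    simpa using ((hasDerivAt_id x).const_add 1).log h1
  have d2 : HasDerivAt (fun y : ℝ => Real.log (1 - y)) (-1 / (1 - x)) x := by
    simpa using ((hasDerivAt_id x).const_sub 1).log h2
  have d3 : HasDerivAt (fun y : ℝ => 2 * y) 2 x := by
    simpa using (hasDerivAt_id x).const_mul 2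
  have := (d1.sub d2).sub d3
  refine this.congr_deriv ?_
  field_simp
  ring

lemma f2_deriv (x : ℝ) (hx : 0 < x) (hx1 : x < 1) :
    HasDerivAt (fun y : ℝ =>
        2 * y + 2 / 3 * y ^ 3 / (1 - y ^ 2) - (Real.log (1 + y) - Real.log (1 - y)))
      (4 / 3 * x ^ 4 / (1 - x ^ 2) ^ 2) x := by
  have h1 : (1 : ℝ) + x ≠ 0 := by nlinarith
  have h2 : (1 : ℝ) - x ≠ 0 := by nlinarith
  have h3 : (1 : ℝ) - x ^ 2 ≠ 0 := by nlinarith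
  have d1 : HasDerivAt (fun y : ℝ => Real.log (1 + y)) (1 / (1 + x)) x := by
    simpa using ((hasDerivAt_id x).const_add 1).log h1
  have d2 : HasDerivAt (fun y : ℝ => Real.log (1 - y)) (-1 / (1 - x)) x := by
    simpa using ((hasDerivAt_id x).const_sub 1).log h2
  have d3 : HasDerivAt (fun y : ℝ => 2 * y) 2 x := by
    simpa using (hasDerivAt_id x).const_mul 2
  have dnum : HasDerivAt (fun y : ℝ => 2 / 3 * y ^ 3) (2 / 3 * (3 * x ^ 2)) x := by
    simpa using (hasDerivAt_pow 3 x).const_mul (2/3 : ℝ)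
  have dden : HasDerivAt (fun y : ℝ => 1 - y ^ 2) (-(2 * x)) x := by
    simpa using ((hasDerivAt_pow 2 x).const_sub 1)
  have d4 := dnum.div dden h3
  have := (d3.add d4).sub (d1.sub d2)
  refine this.congr_deriv ?_
  field_simp
  ring

lemma log_ratio_lb (u : ℝ) (h0 : 0 < u) (h1 : u < 1) :
    2 * u < Real.log (1 + u) - Real.log (1 - u) := by
  set f : ℝ → ℝ := fun y => Real.log (1 + y) - Real.log (1 - y) - 2 * y with hf
  have hcont : ContinuousOn f (Set.Icc 0 u) := by
    apply ContinuousOn.sub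
    apply ContinuousOn.sub
    · exact ((continuous_const.add continuous_id).continuousOn).log
        (fun y hy => by rcases hy with ⟨hy0, hyu⟩; dsimp; nlinarith)
    · exact ((continuous_const.sub continuous_id).continuousOn).log
        (fun y hy => by rcases hy with ⟨hy0, hyu⟩; dsimp; nlinarith)
    · exact (continuous_const.mul continuous_id).continuousOn
  have hmono : StrictMonoOn f (Set.Icc 0 u) := by
    apply strictMonoOn_of_deriv_pos (convex_Icc 0 u) hcont
    intro x hx
    rw [interior_Icc] at hx
    rcases hx with ⟨hx0, hxu⟩
    rw [(f1_deriv x hx0 (hxu.trans h1)).deriv]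
    have : (0:ℝ) < 1 - x ^ 2 := by nlinarith
    positivity
  have := hmono (Set.left_mem_Icc.2 h0.le) (Set.right_mem_Icc.2 h0.le) h0
  simp only [hf] at this
  simp only [add_zero, sub_zero, mul_zero, Real.log_one, sub_self] at this
  linarith

lemma log_ratio_ub (u : ℝ) (h0 : 0 < u) (h1 : u < 1) :
    Real.log (1 + u) - Real.log (1 - u) ≤ 2 * u + 2 / 3 * u ^ 3 / (1 - u ^ 2) := by
  set f : ℝ → ℝ := fun y =>
    2 * y + 2 / 3 * y ^ 3 / (1 - y ^ 2) - (Real.log (1 + y) - Real.log (1 - y)) with hf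
  have hcont : ContinuousOn f (Set.Icc 0 u) := by
    apply ContinuousOn.sub
    · apply ContinuousOn.add
      · exact (continuous_const.mul continuous_id).continuousOn
      · apply ContinuousOn.div
        · exact (continuous_const.mul (continuous_pow 3)).continuousOn
        · exact (continuous_const.sub (continuous_pow 2)).continuousOn
        · intro y hy; rcases hy with ⟨hy0, hyu⟩; dsimp; nlinarith
    · apply ContinuousOn.sub
      · exact ((continuous_const.add continuous_id).continuousOn).log
          (fun y hy => by rcases hy with ⟨hy0, hyu⟩; dsimp; nlinarith)
      · exact ((continuous_const.sub continuous_id).continuousOn).log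
          (fun y hy => by rcases hy with ⟨hy0, hyu⟩; dsimp; nlinarith)
  have hmono : StrictMonoOn f (Set.Icc 0 u) := by
    apply strictMonoOn_of_deriv_pos (convex_Icc 0 u) hcont
    intro x hx
    rw [interior_Icc] at hx
    rcases hx with ⟨hx0, hxu⟩
    rw [(f2_deriv x hx0 (hxu.trans h1)).deriv]
    have : (0:ℝ) < 1 - x ^ 2 := by nlinarith
    positivity
  have := hmono (Set.left_mem_Icc.2 h0.le) (Set.right_mem_Icc.2 h0.le) h0
  simp only [hf] at this
  simp only [add_zero, sub_zero, mul_zero, Real.log_one, sub_self, zero_div,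
    ne_eq, OfNat.ofNat_ne_zero, not_false_eq_true, zero_pow, zero_add] at this
  linarith

lemma lg_sub_lg_succ (z : ℝ) (hz : 0 < z) : lg z - lg (z + 1) = dd z := by
  have h1 : Real.Gamma (z + 1 + 1) = (z + 1) * Real.Gamma (z + 1) := by
    rw [Real.Gamma_add_one (by positivity)]
  have hG : 0 < Real.Gamma (z + 1) := Real.Gamma_pos_of_pos (by positivity)
  rw [lg, lg, dd, h1, Real.log_mul (by positivity) hG.ne']
  ring

lemma dd_pos (z : ℝ) (hz : 0 < z) : 0 < dd z := by
  set u : ℝ := 1 / (2 * z + 1) with hu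
  have hu0 : 0 < u := by positivity
  have hu1 : u < 1 := by rw [hu, div_lt_one (by positivity)]; linarith
  have key := log_ratio_lb u hu0 hu1
  have e1 : (1 : ℝ) + u = (2 * z + 2) / (2 * z + 1) := by rw [hu]; field_simp; try ring
  have e2 : (1 : ℝ) - u = (2 * z) / (2 * z + 1) := by rw [hu]; field_simp; try ring
  have e3 : Real.log (1 + u) - Real.log (1 - u) = Real.log (z + 1) - Real.log z := by
    rw [e1, e2, Real.log_div (by positivity) (by positivity),
      Real.log_div (by positivity) (by positivity)]
    have : (2 : ℝ) * z + 2 = 2 * (z + 1) := by ring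
    rw [this, Real.log_mul two_ne_zero (by positivity), Real.log_mul two_ne_zero hz.ne']
    ring
  rw [e3] at key
  rw [dd]
  have hzu : z + 1 / 2 = 1 / (2 * u) := by rw [hu]; field_simp; try ring
  rw [hzu]
  have : 1 / (2 * u) * (2 * u) = 1 := by field_simp
  calc (0:ℝ) = 1 / (2 * u) * (2 * u) - 1 := by rw [this]; ring
    _ < 1 / (2 * u) * (Real.log (z + 1) - Real.log z) - 1 := by
        have h2u : 0 < 1 / (2 * u) := by positivity
        have := mul_lt_mul_of_pos_left key h2u
        linarith

lemma dd_le (z : ℝ) (hz : 0 < z) : dd z ≤ 1 / (12 * z) - 1 / (12 * (z + 1)) := by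
  set u : ℝ := 1 / (2 * z + 1) with hu
  have hu0 : 0 < u := by positivity
  have hu1 : u < 1 := by rw [hu, div_lt_one (by positivity)]; linarith
  have key := log_ratio_ub u hu0 hu1
  have e1 : (1 : ℝ) + u = (2 * z + 2) / (2 * z + 1) := by rw [hu]; field_simp; try ring
  have e2 : (1 : ℝ) - u = (2 * z) / (2 * z + 1) := by rw [hu]; field_simp; try ring
  have e3 : Real.log (1 + u) - Real.log (1 - u) = Real.log (z + 1) - Real.log z := by
    rw [e1, e2, Real.log_div (by positivity) (by positivity),
      Real.log_div (by positivity) (by positivity)]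
    have : (2 : ℝ) * z + 2 = 2 * (z + 1) := by ring
    rw [this, Real.log_mul two_ne_zero (by positivity), Real.log_mul two_ne_zero hz.ne']
    ring
  rw [e3] at key
  have hzu : z + 1 / 2 = 1 / (2 * u) := by rw [hu]; field_simp; try ring
  have hu2 : (0:ℝ) < 1 - u ^ 2 := by nlinarith
  have key2 : dd z ≤ 1 / (2 * u) * (2 * u + 2 / 3 * u ^ 3 / (1 - u ^ 2)) - 1 := by
    rw [dd, hzu]
    have h2u : 0 < 1 / (2 * u) := by positivity
    have := mul_le_mul_of_nonneg_left key h2u.le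
    linarith
  have e4 : 1 / (2 * u) * (2 * u + 2 / 3 * u ^ 3 / (1 - u ^ 2)) - 1 = u ^ 2 / (3 * (1 - u ^ 2)) := by
    field_simp
    ring
  rw [e4] at key2
  have e5 : u ^ 2 / (3 * (1 - u ^ 2)) = 1 / (12 * z * (z + 1)) := by
    rw [hu]
    rw [div_eq_div_iff (by positivity) (by positivity)]
    field_simp
    ring
  rw [e5] at key2
  have e6 : 1 / (12 * z * (z + 1)) = 1 / (12 * z) - 1 / (12 * (z + 1)) := by
    field_simp
    ring
  linarith

lemma lg_telescope (z : ℝ) (hz : 0 < z) : ∀ n : ℕ, 1 ≤ n →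
    dd z ≤ lg z - lg (z + n) ∧ lg z - lg (z + n) ≤ 1 / (12 * z) - 1 / (12 * (z + n)) := by
  intro n hn
  induction n with
  | zero => omega
  | succ k ih =>
    rcases Nat.eq_or_lt_of_le hn with h1 | h2
    · -- k + 1 = 1
      have hk : k = 0 := by omega
      subst hk
      push_cast
      rw [lg_sub_lg_succ z hz]
      exact ⟨le_refl _, dd_le z hz⟩
    · have hk : 1 ≤ k := by omega
      obtain ⟨ih1, ih2⟩ := ih hk
      have hzk : (0:ℝ) < z + k := by positivity
      have step : lg (z + k) - lg (z + (k+1 : ℕ)) = dd (z + k) := by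
        have := lg_sub_lg_succ (z + k) hzk
        push_cast
        rw [← this]; ring_nf
      constructor
      · have := dd_pos (z + k) hzk
        linarith
      · have := dd_le (z + k) hzk
        have e : z + (k:ℝ) + 1 = z + ((k:ℝ) + 1) := by ring
        rw [e] at this
        push_cast at step ih2 ⊢
        linarith

lemma lg_bounds (z : ℝ) (hz : 0 < z)
    (hlim : Tendsto (fun n : ℕ => lg (z + n)) atTop (nhds 0)) :
    dd z ≤ lg z ∧ lg z ≤ 1 / (12 * z) := by
  have htd : Tendsto (fun n : ℕ => lg z - lg (z + n)) atTop (nhds (lg z)) := by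
    simpa using (tendsto_const_nhds (x := lg z)).sub hlim
  constructor
  · refine ge_of_tendsto htd ?_
    filter_upwards [eventually_ge_atTop 1] with n hn
    exact (lg_telescope z hz n hn).1
  · have h2 : Tendsto (fun n : ℕ => 1 / (12 * z) - 1 / (12 * (z + n))) atTop
        (nhds (1 / (12 * z))) := by
      have : Tendsto (fun n : ℕ => 1 / (12 * (z + n))) atTop (nhds 0) := by
        simp only [one_div]
        apply Tendsto.comp tendsto_inv_atTop_zero
        apply Filter.Tendsto.const_mul_atTop (by norm_num : (0:ℝ) < 12)
        exact tendsto_atTop_add_const_left _ z tendsto_natCast_atTop_atTop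
      simpa using (tendsto_const_nhds (x := 1 / (12 * z))).sub this
    -- lg z ≤ 1/(12z) : limit of both sides
    have key : ∀ᶠ n : ℕ in atTop, lg z - lg (z + n) ≤ 1 / (12 * z) - 1 / (12 * (z + n)) := by
      filter_upwards [eventually_ge_atTop 1] with n hn
      exact (lg_telescope z hz n hn).2
    exact le_of_tendsto_of_tendsto' htd h2 fun n => by
      rcases le_or_gt 1 n with h | h
      · exact (lg_telescope z hz n h).2
      · interval_cases n
        simp

lemma lg_nat_eq (n : ℕ) (hn : 1 ≤ n) :
    lg n = Real.log (Stirling.stirlingSeq n) - Real.log (Real.sqrt π) := by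
  have hn0 : (0:ℝ) < n := by exact_mod_cast hn
  rw [lg, Stirling.log_stirlingSeq_formula, Real.Gamma_nat_eq_factorial,
    Real.log_mul two_ne_zero hn0.ne', Real.log_div hn0.ne' (Real.exp_ne_zero 1),
    Real.log_mul two_ne_zero pi_ne_zero, Real.log_sqrt pi_pos.le, Real.log_exp]
  ring

lemma tendsto_lg_nat : Tendsto (fun n : ℕ => lg n) atTop (nhds 0) := by
  have h1 : Tendsto (fun n : ℕ => Real.log (Stirling.stirlingSeq n) - Real.log (Real.sqrt π))
      atTop (nhds 0) := by
    have hlog : Tendsto (fun n : ℕ => Real.log (Stirling.stirlingSeq n)) atTop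
        (nhds (Real.log (Real.sqrt π))) :=
      ((Real.continuousAt_log (by positivity)).tendsto).comp Stirling.tendsto_stirlingSeq_sqrt_pi
    simpa using hlog.sub (tendsto_const_nhds (x := Real.log (Real.sqrt π)))
  refine h1.congr' ?_
  filter_upwards [eventually_ge_atTop 1] with n hn
  exact (lg_nat_eq n hn).symm

lemma lg_half_identity (n : ℕ) :
    lg ((n:ℝ) + 1/2) = lg (2*((n:ℝ)+1)) - lg ((n:ℝ)+1)
      + ((n:ℝ)+1) * (Real.log ((n:ℝ)+1) - Real.log ((n:ℝ)+1/2)) - 1/2 := by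
  set K : ℝ := (n:ℝ) + 1 with hK
  have hK0 : (0:ℝ) < K := by positivity
  have hKh : (0:ℝ) < K - 1/2 := by have : (0:ℝ) ≤ (n:ℝ) := n.cast_nonneg; rw [hK]; linarith
  have hG2K : (0:ℝ) < Real.Gamma (2*K) := Real.Gamma_pos_of_pos (by positivity)
  have hGK : (0:ℝ) < Real.Gamma K := Real.Gamma_pos_of_pos hK0
  have hGKh : (0:ℝ) < Real.Gamma (K + 1/2) := Real.Gamma_pos_of_pos (by positivity)
  have hdup := Real.Gamma_mul_Gamma_add_half K
  have hlogdup : Real.log (Real.Gamma K) + Real.log (Real.Gamma (K + 1/2))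
      = Real.log (Real.Gamma (2*K)) + (1 - 2*K) * Real.log 2 + Real.log (Real.sqrt π) := by
    rw [← Real.log_mul hGK.ne' hGKh.ne', hdup,
      Real.log_mul (by positivity) (by positivity),
      Real.log_mul hG2K.ne' (by positivity : ((2:ℝ) ^ (1 - 2*K)) ≠ 0),
      Real.log_rpow two_pos]
  have h1 : Real.Gamma (2*K + 1) = 2*K * Real.Gamma (2*K) := Real.Gamma_add_one (by positivity)
  have h2 : Real.Gamma (K + 1) = K * Real.Gamma K := Real.Gamma_add_one hK0.ne'
  have hlog1 : Real.log (Real.Gamma (2*K+1)) = Real.log 2 + Real.log K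
      + Real.log (Real.Gamma (2*K)) := by
    rw [h1, Real.log_mul (by positivity) hG2K.ne', Real.log_mul two_ne_zero hK0.ne']
  have hlog2 : Real.log (Real.Gamma (K+1)) = Real.log K + Real.log (Real.Gamma K) := by
    rw [h2, Real.log_mul hK0.ne' hGK.ne']
  have hlog2K : Real.log (2*K) = Real.log 2 + Real.log K :=
    Real.log_mul two_ne_zero hK0.ne'
  have hlog2pi : Real.log (2*π) = Real.log 2 + Real.log π :=
    Real.log_mul two_ne_zero pi_ne_zero
  have hlogsqrt : Real.log (Real.sqrt π) = Real.log π / 2 := Real.log_sqrt pi_pos.le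
  have harg : (n:ℝ) + 1/2 + 1 = K + 1/2 := by rw [hK]; ring
  have harg2 : (n:ℝ) + 1/2 = K - 1/2 := by rw [hK]; ring
  simp only [lg]
  rw [harg, harg2]
  linear_combination hlogdup - hlog1 + hlog2 + (2*K + 1/2) * hlog2K
    - (1/2) * hlog2pi + hlogsqrt

lemma tendsto_lg_comp (f : ℕ → ℕ) (hf : Tendsto f atTop atTop) :
    Tendsto (fun n : ℕ => lg (f n)) atTop (nhds 0) :=
  tendsto_lg_nat.comp hf

lemma tendsto_lg_half : Tendsto (fun n : ℕ => lg ((n:ℝ) + 1/2)) atTop (nhds 0) := by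
  have ha : Tendsto (fun n : ℕ => lg (2*((n:ℝ)+1))) atTop (nhds 0) := by
    have := tendsto_lg_comp (fun n => 2*(n+1))
      (tendsto_atTop_mono (fun n => by simp only [id_eq]; omega) tendsto_id)
    refine this.congr fun n => ?_
    push_cast
    ring_nf
  have hb : Tendsto (fun n : ℕ => lg ((n:ℝ)+1)) atTop (nhds 0) := by
    have := tendsto_lg_comp (fun n => n+1)
      (tendsto_atTop_mono (fun n => by simp only [id_eq]; omega) tendsto_id)
    refine this.congr fun n => ?_
    push_cast
    ring_nf
  have hc : Tendsto (fun k : ℕ => (k:ℝ) * (Real.log k - Real.log ((k:ℝ) - 1/2)))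
      atTop (nhds (1/2)) := by
    have base := Real.tendsto_one_add_div_pow_exp (-1/2)
    have hlog : Tendsto (fun k : ℕ => (k:ℝ) * Real.log ((1:ℝ) + (-1/2)/k)) atTop
        (nhds (-1/2)) := by
      have := ((Real.continuousAt_log (Real.exp_pos (-1/2)).ne').tendsto).comp base
      simpa [Function.comp_def, Real.log_pow] using this
    have heq : ∀ᶠ k : ℕ in atTop, (k:ℝ) * Real.log ((1:ℝ) + (-1/2)/k)
        = (k:ℝ) * (Real.log ((k:ℝ) - 1/2) - Real.log k) := by
      filter_upwards [eventually_ge_atTop 1] with k hk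
      have hk1 : (1:ℝ) ≤ (k:ℝ) := by exact_mod_cast hk
      have hk0 : (0:ℝ) < k := by linarith
      have e : (1:ℝ) + (-1/2)/k = ((k:ℝ) - 1/2)/k := by field_simp; ring
      rw [e, Real.log_div (ne_of_gt (by linarith : (0:ℝ) < (k:ℝ) - 1/2)) hk0.ne']
    have h2 : Tendsto (fun k : ℕ => (k:ℝ) * (Real.log ((k:ℝ) - 1/2) - Real.log k)) atTop
        (nhds (-1/2)) := hlog.congr' heq
    have := h2.neg
    norm_num at this
    refine this.congr fun k => ?_
    ring
  have hc' : Tendsto (fun n : ℕ => ((n:ℝ)+1) * (Real.log ((n:ℝ)+1) - Real.log ((n:ℝ)+1/2)))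
      atTop (nhds (1/2)) := by
    have h2 := (tendsto_add_atTop_iff_nat 1).2 hc
    refine h2.congr fun n => ?_
    have e1 : ((n + 1 : ℕ) : ℝ) = (n:ℝ) + 1 := by push_cast; ring
    rw [e1, show (n:ℝ) + 1 - 1/2 = (n:ℝ) + 1/2 from by ring]
  have total := ((ha.sub hb).add hc').sub (tendsto_const_nhds (x := (1/2 : ℝ)))
  norm_num at total
  refine total.congr fun n => ?_
  rw [lg_half_identity n]
  try ring

lemma tendsto_lg_shift (j : ℕ) : Tendsto (fun n : ℕ => lg ((j:ℝ)/2 + n)) atTop (nhds 0) := by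
  rcases Nat.even_or_odd j with ⟨c, hc⟩ | ⟨c, hc⟩
  · have := tendsto_lg_nat.comp (tendsto_add_atTop_nat c)
    refine this.congr fun n => ?_
    simp only [Function.comp_apply]
    congr 1
    subst hc
    push_cast
    ring
  · have := tendsto_lg_half.comp (tendsto_add_atTop_nat c)
    refine this.congr fun n => ?_
    simp only [Function.comp_apply]
    congr 1
    subst hc
    push_cast
    ring

lemma lg_pos_le (j : ℕ) (hj : 1 ≤ j) :
    0 < lg ((j:ℝ)/2) ∧ lg ((j:ℝ)/2) ≤ 1 / (12 * ((j:ℝ)/2)) := by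
  have hz : (0:ℝ) < (j:ℝ)/2 := by
    have : (1:ℝ) ≤ (j:ℝ) := by exact_mod_cast hj
    linarith
  have h := lg_bounds ((j:ℝ)/2) hz (tendsto_lg_shift j)
  exact ⟨lt_of_lt_of_le (dd_pos _ hz) h.1, h.2⟩

lemma Bf_pos (z : ℝ) (hz : 0 < z) : 0 < Bf z := by
  have : (0:ℝ) < z / Real.exp 1 := by positivity
  have h2 : (0:ℝ) < 2*π*z := by positivity
  exact mul_pos (Real.sqrt_pos.2 h2) (Real.rpow_pos_of_pos this z)

lemma log_Bf (z : ℝ) (hz : 0 < z) :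
    Real.log (Bf z) = (z + 1/2) * Real.log z - z + Real.log (2*π) / 2 := by
  have h1 : (0:ℝ) < z / Real.exp 1 := by positivity
  have h2 : (0:ℝ) < 2*π*z := by positivity
  rw [Bf, Real.log_mul (Real.sqrt_pos.2 h2).ne' (Real.rpow_pos_of_pos h1 z).ne',
    Real.log_sqrt h2.le, Real.log_rpow h1, Real.log_div hz.ne' (Real.exp_ne_zero 1),
    Real.log_exp, Real.log_mul (by positivity : (2*π : ℝ) ≠ 0) hz.ne']
  ring

lemma Bf_eq_exp (z : ℝ) (hz : 0 < z) :
    Bf z = Real.exp ((z + 1/2) * Real.log z - z + Real.log (2*π) / 2) := by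
  rw [← log_Bf z hz, Real.exp_log (Bf_pos z hz)]

lemma Gamma_eq_Bf (z : ℝ) (hz : 0 < z) :
    Real.Gamma (z + 1) = Bf z * Real.exp (lg z) := by
  have hG : 0 < Real.Gamma (z + 1) := Real.Gamma_pos_of_pos (by positivity)
  rw [← Real.exp_log hG, ← Real.exp_log (Bf_pos z hz), ← Real.exp_add, log_Bf z hz, lg]
  ring_nf

lemma Gamma_half_lb (j : ℕ) (hj : 1 ≤ j) : Bf ((j:ℝ)/2) < Real.Gamma ((j:ℝ)/2 + 1) := by
  have hz : (0:ℝ) < (j:ℝ)/2 := by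
    have : (1:ℝ) ≤ (j:ℝ) := by exact_mod_cast hj
    linarith
  rw [Gamma_eq_Bf _ hz]
  nth_rewrite 1 [← mul_one (Bf ((j:ℝ)/2))]
  exact mul_lt_mul_of_pos_left
    (by rw [show (1:ℝ) = Real.exp 0 from (Real.exp_zero).symm]
        exact Real.exp_lt_exp.2 (lg_pos_le j hj).1) (Bf_pos _ hz)

lemma Gamma_half_ub (j : ℕ) (hj : 1 ≤ j) :
    Real.Gamma ((j:ℝ)/2 + 1) ≤ Bf ((j:ℝ)/2) * Real.exp (1 / (12 * ((j:ℝ)/2))) := by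
  have hz : (0:ℝ) < (j:ℝ)/2 := by
    have : (1:ℝ) ≤ (j:ℝ) := by exact_mod_cast hj
    linarith
  rw [Gamma_eq_Bf _ hz]
  exact mul_le_mul_of_nonneg_left (Real.exp_le_exp.2 (lg_pos_le j hj).2) (Bf_pos _ hz).le

/-- For all integers `m ≥ 1` and `N ≥ 1`,
`V(mN)/V(N)^m = Γ(N/2+1)^m / Γ(mN/2+1) < (Nπ)^{(m−1)/2} · m^{−(mN+1)/2} · e^{m/(6N)}`. -/
theorem volume_ratio_gamma_bound (m N : ℕ) (hm : 1 ≤ m) (hN : 1 ≤ N) :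
    vb (m * N) / (vb N) ^ m =
      Real.Gamma ((N : ℝ) / 2 + 1) ^ m / Real.Gamma ((m * N : ℝ) / 2 + 1) ∧
    Real.Gamma ((N : ℝ) / 2 + 1) ^ m / Real.Gamma ((m * N : ℝ) / 2 + 1) <
      ((N : ℝ) * Real.pi) ^ (((m : ℝ) - 1) / 2) *
        (m : ℝ) ^ (-(((m : ℝ) * (N : ℝ) + 1) / 2)) * Real.exp ((m : ℝ) / (6 * (N : ℝ))) := by
  have hN0 : (0:ℝ) < N := by exact_mod_cast hN
  have hm0 : (0:ℝ) < m := by exact_mod_cast hm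
  set x : ℝ := (N:ℝ)/2 with hx
  set w : ℝ := ((m:ℝ) * (N:ℝ))/2 with hw
  have hx0 : 0 < x := by positivity
  have hw0 : 0 < w := by positivity
  have hwx : w = (m:ℝ) * x := by rw [hw, hx]; ring
  have hGx : 0 < Real.Gamma (x + 1) := Real.Gamma_pos_of_pos (by positivity)
  have hGw : 0 < Real.Gamma (w + 1) := Real.Gamma_pos_of_pos (by positivity)
  have hcast : ((m * N : ℕ):ℝ) = (m:ℝ) * (N:ℝ)  := by push_cast; ring
  constructor
  · -- equality part
    rw [vb, vb, hcast]
    have hpow : ((π : ℝ) ^ ((N:ℝ)/2)) ^ m = π ^ ((m:ℝ) * (N:ℝ)/2) := by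
      rw [← Real.rpow_natCast ((π:ℝ) ^ ((N:ℝ)/2)) m, ← Real.rpow_mul pi_pos.le]
      ring_nf
    have hp1 : (0:ℝ) < π ^ ((m:ℝ) * (N:ℝ)/2) := Real.rpow_pos_of_pos pi_pos _
    rw [div_pow, hpow, div_div_div_comm, div_self hp1.ne', one_div_div]
  · -- inequality part
    have hub := Gamma_half_ub N hN
    have hlb := Gamma_half_lb (m * N) (Nat.one_le_iff_ne_zero.2 (by positivity))
    rw [hcast] at hlb
    set A : ℝ := Bf x * Real.exp (1 / (12 * x)) with hA
    have hA0 : 0 < A := mul_pos (Bf_pos x hx0) (Real.exp_pos _)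
    have step1 : Real.Gamma (x + 1) ^ m / Real.Gamma (w + 1) ≤ A ^ m / Real.Gamma (w + 1) := by
      exact (div_le_div_iff_of_pos_right hGw).2 (pow_le_pow_left₀ hGx.le hub m)
    have step2 : A ^ m / Real.Gamma (w + 1) < A ^ m / Bf w :=
      div_lt_div_of_pos_left (pow_pos hA0 m) (Bf_pos w hw0) hlb
    have key : A ^ m / Bf w =
        ((N : ℝ) * π) ^ (((m : ℝ) - 1) / 2) *
          (m : ℝ) ^ (-(((m : ℝ) * (N : ℝ) + 1) / 2)) * Real.exp ((m : ℝ) / (6 * (N : ℝ))) := by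
      have hAe : A = Real.exp ((x + 1/2) * Real.log x - x + Real.log (2*π) / 2 + 1/(12*x)) := by
        rw [hA, Bf_eq_exp x hx0, ← Real.exp_add]
      have hAm : A ^ m = Real.exp ((m:ℝ) *
          ((x + 1/2) * Real.log x - x + Real.log (2*π) / 2 + 1/(12*x))) := by
        rw [hAe, ← Real.exp_nat_mul]
      have hBw : Bf w = Real.exp ((w + 1/2) * Real.log w - w + Real.log (2*π) / 2) :=
        Bf_eq_exp w hw0
      rw [hAm, hBw, ← Real.exp_sub]
      have hT1 : ((N : ℝ) * π) ^ (((m : ℝ) - 1) / 2)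
          = Real.exp (Real.log ((N:ℝ) * π) * (((m : ℝ) - 1) / 2)) :=
        Real.rpow_def_of_pos (by positivity) _
      have hT2 : (m : ℝ) ^ (-(((m : ℝ) * (N : ℝ) + 1) / 2))
          = Real.exp (Real.log (m:ℝ) * (-(((m : ℝ) * (N : ℝ) + 1) / 2))) :=
        Real.rpow_def_of_pos hm0 _
      rw [hT1, hT2, ← Real.exp_add, ← Real.exp_add]
      congr 1
      have hlogw : Real.log w = Real.log (m:ℝ) + Real.log x := by
        rw [hwx, Real.log_mul hm0.ne' hx0.ne']
      have hlogNpi : Real.log ((N:ℝ) * π) = Real.log (2*π) + Real.log x := by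
        rw [show (N:ℝ) * π = (2*π) * x from by rw [hx]; ring,
          Real.log_mul (by positivity) hx0.ne']
      rw [hlogw, hlogNpi, hwx]
      have h12 : (1:ℝ)/(12*x) = 1/(6*(N:ℝ)) := by rw [hx]; ring_nf
      field_simp
      ring
    calc Real.Gamma (x + 1) ^ m / Real.Gamma (w + 1) ≤ A ^ m / Real.Gamma (w + 1) := step1
      _ < A ^ m / Bf w := step2
      _ = _ := key

end Paper
end
end

section
/- Let K be a number field with group of roots of unity μ_K of order ω_K, and let 1 ≤ m ≤ n. Let A_m be the set of matrices D ∈ M_{m×n}(K) that are in row-reduced echelon form, have rank m, have every entry in μ_K ∪ {0}, and have exactly one nonzero entry in each column. Then the cardinality of A_m equals ω_K^{n−m} · S(n,m), where S(n,m) is the Stirling number of the second kind. -/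
open scoped BigOperators ENNReal NNReal nonZeroDivisors
open MeasureTheory NumberField NumberField.InfinitePlace NumberField.mixedEmbedding

noncomputable section

namespace Paper

attribute [local instance] Classical.propDecidable

variable (K : Type*) [Field K] [NumberField K]

/-- A full-row-rank matrix in row-reduced echelon form: there are strictly increasing pivot
columns, the pivot entries are `1`, the entries to the left of a pivot vanish, and the other
entries of a pivot column vanish. -/
def IsRREF {m n : ℕ} (D : Matrix (Fin m) (Fin n) K) : Prop :=
  ∃ p : Fin m → Fin n, StrictMono p ∧
    (∀ i, D i (p i) = 1) ∧
    (∀ (i : Fin m) (j : Fin n), (j : ℕ) < (p i : ℕ) → D i j = 0) ∧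
    (∀ i i', i' ≠ i → D i' (p i) = 0)

/-- Stirling numbers of the second kind. -/
def stirling2 : ℕ → ℕ → ℕ
  | 0, 0 => 1
  | 0, _ + 1 => 0
  | _ + 1, 0 => 0
  | n + 1, m + 1 => (m + 1) * stirling2 n (m + 1) + stirling2 n m


/-! ### Auxiliary material for `card_Am` -/

section AuxCount

/-- "Good" functions `Fin n → Fin m`: surjective, and every value smaller than `f j`
occurs before `j`.  These are exactly the functions whose fibers form an ordered set
partition (ordered by minima), counted by Stirling numbers of the second kind. -/
def GoodF {n m : ℕ} (f : Fin n → Fin m) : Prop :=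
  Function.Surjective f ∧ ∀ (j : Fin n) (i : Fin m), i < f j → ∃ j', j' < j ∧ f j' = i

lemma goodF_snoc_mem {n m : ℕ} (g : Fin n → Fin (m + 1)) (hg : GoodF g) (c : Fin (m + 1)) :
    GoodF (Fin.snoc g c) := by
  constructor
  · intro i
    obtain ⟨j, hj⟩ := hg.1 i
    exact ⟨Fin.castSucc j, by simp [hj]⟩
  · intro j i hij
    induction j using Fin.lastCases with
    | last =>
      obtain ⟨j₀, hj₀⟩ := hg.1 i
      exact ⟨Fin.castSucc j₀, Fin.castSucc_lt_last j₀, by simp [hj₀]⟩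
    | cast j₀ =>
      rw [Fin.snoc_castSucc] at hij
      obtain ⟨j', hj', hfj'⟩ := hg.2 j₀ i hij
      exact ⟨Fin.castSucc j', by simpa using hj', by simp [hfj']⟩

lemma goodF_snoc_new {n m : ℕ} (h : Fin n → Fin m) (hh : GoodF h) :
    GoodF (Fin.snoc (fun j => Fin.castSucc (h j)) (Fin.last m)) := by
  constructor
  · intro i
    induction i using Fin.lastCases with
    | last => exact ⟨Fin.last n, by simp⟩
    | cast i₀ =>
      obtain ⟨j, hj⟩ := hh.1 i₀
      exact ⟨Fin.castSucc j, by simp [hj]⟩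
  · intro j i hij
    induction j using Fin.lastCases with
    | last =>
      rw [Fin.snoc_last] at hij
      obtain ⟨i₀, rfl⟩ := Fin.exists_castSucc_eq.2 hij.ne
      obtain ⟨j₀, hj₀⟩ := hh.1 i₀
      exact ⟨Fin.castSucc j₀, Fin.castSucc_lt_last j₀, by simp [hj₀]⟩
    | cast j₀ =>
      rw [Fin.snoc_castSucc] at hij
      have hlt : i < Fin.last m := hij.trans (Fin.castSucc_lt_last _)
      obtain ⟨i₀, rfl⟩ := Fin.exists_castSucc_eq.2 hlt.ne
      rw [Fin.castSucc_lt_castSucc_iff] at hij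
      obtain ⟨j', hj', hfj'⟩ := hh.2 j₀ i₀ hij
      exact ⟨Fin.castSucc j', by simpa using hj', by simp [hfj']⟩

def snocMap (n m : ℕ) :
    (Fin (m + 1) × {g : Fin n → Fin (m + 1) // GoodF g}) ⊕ {h : Fin n → Fin m // GoodF h} →
      {f : Fin (n + 1) → Fin (m + 1) // GoodF f} :=
  Sum.elim
    (fun cg => ⟨Fin.snoc cg.2.1 cg.1, goodF_snoc_mem cg.2.1 cg.2.2 cg.1⟩)
    (fun h => ⟨Fin.snoc (fun j => Fin.castSucc (h.1 j)) (Fin.last m),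
      goodF_snoc_new h.1 h.2⟩)

lemma card_goodF : ∀ n m : ℕ, Nat.card {f : Fin n → Fin m // GoodF f} = stirling2 n m := by
  intro n
  induction n with
  | zero =>
    intro m
    match m with
    | 0 =>
      rw [stirling2]
      rw [Nat.card_eq_one_iff_unique]
      refine ⟨⟨fun a b => Subtype.ext (funext fun j => j.elim0)⟩,
        ⟨⟨fun j => j.elim0, fun i => i.elim0, fun j => j.elim0⟩⟩⟩
    | m + 1 =>
      have : IsEmpty {f : Fin 0 → Fin (m + 1) // GoodF f} := by
        refine ⟨fun x => ?_⟩
        obtain ⟨j, -⟩ := x.2.1 0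
        exact j.elim0
      rw [Nat.card_of_isEmpty, stirling2]
  | succ n ih =>
    intro m
    match m with
    | 0 =>
      have : IsEmpty {f : Fin (n + 1) → Fin 0 // GoodF f} := ⟨fun x => (x.1 0).elim0⟩
      rw [Nat.card_of_isEmpty, stirling2]
    | m + 1 =>
      classical
      have hinj : Function.Injective (snocMap n m) := by
        rintro (⟨c, g, hg⟩ | ⟨h, hh⟩) (⟨c', g', hg'⟩ | ⟨h', hh'⟩) hab
        · have h1 := congrArg Subtype.val hab
          simp only [snocMap, Sum.elim_inl] at h1
          have hc : c = c' := by
            have := congrFun h1 (Fin.last n); simpa using this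
          have hgg : g = g' := by
            funext j
            have := congrFun h1 (Fin.castSucc j); simpa using this
          subst hc; subst hgg; rfl
        · exfalso
          have h1 := congrArg Subtype.val hab
          simp only [snocMap, Sum.elim_inl, Sum.elim_inr] at h1
          obtain ⟨j, hj⟩ := hg.1 (Fin.last m)
          have h2 := congrFun h1 (Fin.castSucc j)
          rw [Fin.snoc_castSucc, Fin.snoc_castSucc, hj] at h2
          exact (Fin.castSucc_lt_last (h' j)).ne h2.symm
        · exfalso
          have h1 := congrArg Subtype.val hab
          simp only [snocMap, Sum.elim_inl, Sum.elim_inr] at h1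
          obtain ⟨j, hj⟩ := hg'.1 (Fin.last m)
          have h2 := congrFun h1 (Fin.castSucc j)
          rw [Fin.snoc_castSucc, Fin.snoc_castSucc, hj] at h2
          exact (Fin.castSucc_lt_last (h j)).ne h2
        · have h1 := congrArg Subtype.val hab
          simp only [snocMap, Sum.elim_inr] at h1
          have hhh : h = h' := by
            funext j
            have h2 := congrFun h1 (Fin.castSucc j)
            rw [Fin.snoc_castSucc, Fin.snoc_castSucc] at h2
            exact Fin.castSucc_injective _ h2
          subst hhh; rfl
      have hsurj : Function.Surjective (snocMap n m) := by
        rintro ⟨f, hf⟩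
        set g : Fin n → Fin (m + 1) := fun j => f (Fin.castSucc j) with hgdef
        have hg2 : ∀ (j : Fin n) (i : Fin (m + 1)), i < g j → ∃ j', j' < j ∧ g j' = i := by
          intro j i hij
          obtain ⟨j', hj', hfj'⟩ := hf.2 (Fin.castSucc j) i hij
          obtain ⟨j₀, rfl⟩ :=
            Fin.exists_castSucc_eq.2 (hj'.trans (Fin.castSucc_lt_last j)).ne
          exact ⟨j₀, by simpa using hj', hfj'⟩
        by_cases hs : Function.Surjective g
        · refine ⟨Sum.inl (f (Fin.last n), ⟨g, hs, hg2⟩), ?_⟩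
          apply Subtype.ext
          funext j
          induction j using Fin.lastCases with
          | last => simp [snocMap]
          | cast j₀ => simp [snocMap, hgdef]
        · have hlt : ∀ j, g j ≠ Fin.last m := by
            intro j hj
            apply hs
            intro i
            rcases eq_or_ne i (Fin.last m) with rfl | hne
            · exact ⟨j, hj⟩
            · have hi : i < g j := by rw [hj]; exact Fin.lt_last_iff_ne_last.2 hne
              obtain ⟨j', -, hfj'⟩ := hg2 j i hi
              exact ⟨j', hfj'⟩
          set h : Fin n → Fin m := fun j => (g j).castPred (hlt j) with hhdef
          have hch : ∀ j, Fin.castSucc (h j) = g j := fun j => Fin.castSucc_castPred _ _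
          have hflast : f (Fin.last n) = Fin.last m := by
            obtain ⟨j, hj⟩ := hf.1 (Fin.last m)
            rcases Fin.eq_castSucc_or_eq_last j with ⟨j₀, rfl⟩ | rfl
            · exact absurd hj (hlt j₀)
            · exact hj
          have hhgood : GoodF h := by
            constructor
            · intro i
              obtain ⟨j, hj⟩ := hf.1 (Fin.castSucc i)
              have hjne : j ≠ Fin.last n := by
                rintro rfl
                rw [hflast] at hj
                exact (Fin.castSucc_lt_last i).ne hj.symm
              obtain ⟨j₀, rfl⟩ := Fin.exists_castSucc_eq.2 hjne
              refine ⟨j₀, Fin.castSucc_injective _ ?_⟩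
              rw [hch]; exact hj
            · intro j i hij
              have hlt2 : Fin.castSucc i < g j := by
                rw [← hch]; exact Fin.castSucc_lt_castSucc_iff.2 hij
              obtain ⟨j', hj', hfj'⟩ := hg2 j _ hlt2
              refine ⟨j', hj', Fin.castSucc_injective _ ?_⟩
              rw [hch]; exact hfj'
          refine ⟨Sum.inr ⟨h, hhgood⟩, ?_⟩
          apply Subtype.ext
          funext j
          induction j using Fin.lastCases with
          | last => simp [snocMap, hflast]
          | cast j₀ =>
            have h3 : (snocMap n m (Sum.inr ⟨h, hhgood⟩)).1 (Fin.castSucc j₀) =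
                Fin.castSucc (h j₀) := by simp [snocMap]
            rw [h3, hch]
      have key := Nat.card_eq_of_bijective (snocMap n m) ⟨hinj, hsurj⟩
      rw [← key, Nat.card_sum, Nat.card_prod, ih (m + 1), ih m]
      have hfin : Nat.card (Fin (m + 1)) = m + 1 := by
        rw [Nat.card_eq_fintype_card, Fintype.card_fin]
      rw [hfin]
      rfl

end AuxCount

section AuxMat

lemma isRootOfUnity_one : IsRootOfUnity K 1 := ⟨1, one_pos, one_pow 1⟩

lemma ne_zero_of_isRootOfUnity {x : K} (hx : IsRootOfUnity K x) : x ≠ 0 := by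
  obtain ⟨k, hk, hxk⟩ := hx
  rintro rfl
  rw [zero_pow hk.ne'] at hxk
  exact zero_ne_one hxk

lemma finite_isRootOfUnity : {x : K | IsRootOfUnity K x}.Finite := by
  apply Set.Finite.subset (NumberField.Embeddings.finite_of_norm_le K ℂ 1)
  rintro x ⟨k, hk, hxk⟩
  have hint : IsIntegral ℤ x := by
    refine ⟨Polynomial.X ^ k - Polynomial.C 1, Polynomial.monic_X_pow_sub_C 1 hk.ne', ?_⟩
    simp [hxk]
  refine ⟨hint, fun φ => ?_⟩
  have h1 : ‖φ x‖ ^ k = 1 := by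
    rw [← norm_pow, ← map_pow, hxk, map_one, norm_one]
  by_contra hgt
  push_neg at hgt
  exact (one_lt_pow₀ hgt hk.ne').ne' h1

/-- Pivot columns: columns that are the first occurrence of their value. -/
def IsPivot {n m : ℕ} (f : Fin n → Fin m) (j : Fin n) : Prop := ∀ j' < j, f j' ≠ f j

/-- The pivot column of row `i`: the first column whose value is `i`. -/
def pivIdx {n m : ℕ} (f : Fin n → Fin m) (hf : Function.Surjective f) (i : Fin m) : Fin n :=
  (Finset.univ.filter fun j => f j = i).min' (by
    obtain ⟨j, hj⟩ := hf i
    exact ⟨j, Finset.mem_filter.2 ⟨Finset.mem_univ j, hj⟩⟩)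

lemma pivIdx_spec {n m : ℕ} (f : Fin n → Fin m) (hf : Function.Surjective f) (i : Fin m) :
    f (pivIdx f hf i) = i := by
  have h : pivIdx f hf i ∈ Finset.univ.filter fun j => f j = i := Finset.min'_mem _ _
  exact (Finset.mem_filter.1 h).2

lemma pivIdx_le {n m : ℕ} (f : Fin n → Fin m) (hf : Function.Surjective f) {i : Fin m}
    {j : Fin n} (hj : f j = i) : pivIdx f hf i ≤ j :=
  Finset.min'_le _ _ (Finset.mem_filter.2 ⟨Finset.mem_univ j, hj⟩)

lemma isPivot_pivIdx {n m : ℕ} (f : Fin n → Fin m) (hf : Function.Surjective f) (i : Fin m) :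
    IsPivot f (pivIdx f hf i) := by
  intro j' hj' heq
  rw [pivIdx_spec f hf i] at heq
  exact absurd (pivIdx_le f hf heq) (not_le.2 hj')

lemma pivIdx_strictMono {n m : ℕ} {f : Fin n → Fin m} (hf : GoodF f) :
    StrictMono (pivIdx f hf.1) := by
  intro i i' hii'
  have h1 : f (pivIdx f hf.1 i') = i' := pivIdx_spec f hf.1 i'
  obtain ⟨j', hj', hfj'⟩ := hf.2 (pivIdx f hf.1 i') i (by rw [h1]; exact hii')
  exact lt_of_le_of_lt (pivIdx_le f hf.1 hfj') hj'

lemma card_isPivot {n m : ℕ} {f : Fin n → Fin m} (hf : GoodF f) :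
    Nat.card {j : Fin n // IsPivot f j} = m := by
  have h := Nat.card_eq_of_bijective (fun j : {j : Fin n // IsPivot f j} => f j.1) ?_
  · rw [h, Nat.card_eq_fintype_card, Fintype.card_fin]
  constructor
  · rintro ⟨j, hj⟩ ⟨j', hj'⟩ hjj'
    simp only at hjj'
    apply Subtype.ext
    rcases lt_trichotomy j j' with hlt | heq | hgt
    · exact absurd hjj' (hj' j hlt)
    · exact heq
    · exact absurd hjj'.symm (hj j' hgt)
  · intro i
    exact ⟨⟨pivIdx f hf.1 i, isPivot_pivIdx f hf.1 i⟩, pivIdx_spec f hf.1 i⟩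

lemma card_nonPivot {n m : ℕ} {f : Fin n → Fin m} (hf : GoodF f) :
    Nat.card {j : Fin n // ¬ IsPivot f j} = n - m := by
  classical
  have h1 : Fintype.card {j : Fin n // IsPivot f j} = m := by
    rw [← Nat.card_eq_fintype_card]; exact card_isPivot hf
  rw [Nat.card_eq_fintype_card, Fintype.card_subtype_compl, h1, Fintype.card_fin]

/-- The admissible coefficient functions for a given shape `f`. -/
def WSet {n m : ℕ} (f : Fin n → Fin m) : Type _ :=
  {v : Fin n → K // (∀ j, IsRootOfUnity K (v j)) ∧ ∀ j, IsPivot f j → v j = 1}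

def wEquiv {n m : ℕ} (f : Fin n → Fin m) :
    WSet K f ≃ ({j : Fin n // ¬ IsPivot f j} → {x : K // IsRootOfUnity K x}) where
  toFun v u := ⟨v.1 u.1, v.2.1 u.1⟩
  invFun u := ⟨fun j => if h : IsPivot f j then 1 else (u ⟨j, h⟩).1,
    ⟨fun j => by
      by_cases h : IsPivot f j
      · simpa [h] using isRootOfUnity_one K
      · simpa [h] using (u ⟨j, h⟩).2,
     fun j hj => by simp [hj]⟩⟩
  left_inv v := by
    apply Subtype.ext; funext j
    by_cases h : IsPivot f j
    · simp [h, v.2.2 j h]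
    · simp [h]
  right_inv u := by
    funext u'
    apply Subtype.ext
    simp [u'.2]

lemma card_WSet {n m : ℕ} {f : Fin n → Fin m} (hf : GoodF f) :
    Nat.card (WSet K f) = ωK K ^ (n - m) := by
  haveI : Finite {x : K // IsRootOfUnity K x} := (finite_isRootOfUnity K).to_subtype
  rw [Nat.card_congr (wEquiv K f), Nat.card_fun, card_nonPivot hf]
  rfl

/-- The matrix built from a shape `f` and coefficients `v`. -/
def mkMat {n m : ℕ} (f : Fin n → Fin m) (v : Fin n → K) : Matrix (Fin m) (Fin n) K :=
  Matrix.of fun i j => if f j = i then v j else 0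

lemma mkMat_mem {n m : ℕ} {f : Fin n → Fin m} (hf : GoodF f) {v : Fin n → K}
    (hv1 : ∀ j, IsRootOfUnity K (v j)) (hv2 : ∀ j, IsPivot f j → v j = 1) :
    IsRREF K (mkMat K f v) ∧ (mkMat K f v).rank = m ∧
      (∀ i j, mkMat K f v i j = 0 ∨ IsRootOfUnity K (mkMat K f v i j)) ∧
      (∀ j, ∃! i, mkMat K f v i j ≠ 0) := by
  classical
  set p := pivIdx f hf.1 with hp
  have hfp : ∀ i, f (p i) = i := fun i => pivIdx_spec f hf.1 i
  have hDp : ∀ i, mkMat K f v i (p i) = 1 := by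
    intro i
    show (if f (p i) = i then v (p i) else 0) = 1
    rw [if_pos (hfp i)]
    exact hv2 _ (isPivot_pivIdx f hf.1 i)
  have hcol : ∀ i i', i' ≠ i → mkMat K f v i' (p i) = 0 := by
    intro i i' hne
    show (if f (p i) = i' then v (p i) else 0) = 0
    rw [if_neg (by rw [hfp i]; exact fun h => hne h.symm)]
  refine ⟨⟨p, pivIdx_strictMono hf, hDp, ?_, hcol⟩, ?_, ?_, ?_⟩
  · -- left zeros
    intro i j hj
    show (if f j = i then v j else 0) = 0
    rw [if_neg]
    intro hfj
    exact absurd (pivIdx_le f hf.1 hfj) (not_le.2 hj)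
  · -- rank
    set E : Matrix (Fin n) (Fin m) K := Matrix.of fun j i' => if j = p i' then (1 : K) else 0
      with hE
    have hDE : mkMat K f v * E = 1 := by
      ext i i'
      rw [Matrix.mul_apply]
      rw [Finset.sum_eq_single (p i')]
      · show mkMat K f v i (p i') * (if p i' = p i' then (1 : K) else 0) = _
        rw [if_pos rfl, mul_one, Matrix.one_apply]
        by_cases h : i = i'
        · subst h; rw [hDp i, if_pos rfl]
        · rw [hcol i' i h, if_neg h]
      · intro j _ hj
        show mkMat K f v i j * (if j = p i' then (1 : K) else 0) = 0
        rw [if_neg hj, mul_zero]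
      · intro hmem
        exact absurd (Finset.mem_univ _) hmem
    have hle : (mkMat K f v).rank ≤ m := by
      have := (mkMat K f v).rank_le_card_height
      simpa using this
    have hge : m ≤ (mkMat K f v).rank := by
      have h2 := Matrix.rank_mul_le_left (mkMat K f v) E
      rw [hDE, Matrix.rank_one] at h2
      simpa using h2
    exact le_antisymm hle hge
  · -- entries
    intro i j
    show (if f j = i then v j else 0) = 0 ∨ IsRootOfUnity K (if f j = i then v j else 0)
    by_cases h : f j = i
    · rw [if_pos h]; exact Or.inr (hv1 j)
    · rw [if_neg h]; exact Or.inl rfl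
  · -- unique nonzero
    intro j
    refine ⟨f j, ?_, ?_⟩
    · show (if f j = f j then v j else 0) ≠ 0
      rw [if_pos rfl]
      exact ne_zero_of_isRootOfUnity K (hv1 j)
    · intro i hi
      by_contra hne
      apply hi
      show (if f j = i then v j else 0) = 0
      rw [if_neg (fun h => hne h.symm)]

end AuxMat

/-- Packaging a shape and coefficients into a matrix of the counted family. -/
def mkMatPack (n m : ℕ) (x : Σ f : {f : Fin n → Fin m // GoodF f}, WSet K f.1) :
    {D : Matrix (Fin m) (Fin n) K // IsRREF K D ∧ D.rank = m ∧
      (∀ i j, D i j = 0 ∨ IsRootOfUnity K (D i j)) ∧ (∀ j, ∃! i, D i j ≠ 0)} :=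
  ⟨mkMat K x.1.1 x.2.1, mkMat_mem K x.1.2 x.2.2.1 x.2.2.2⟩

lemma mkMatPack_injective (n m : ℕ) : Function.Injective (mkMatPack K n m) := by
  rintro ⟨⟨f, hf⟩, v, hv⟩ ⟨⟨f', hf'⟩, v', hv'⟩ hab
  have hmat : mkMat K f v = mkMat K f' v' := congrArg Subtype.val hab
  have hff : f = f' := by
    funext j
    by_contra hne
    have h1 : mkMat K f v (f j) j ≠ 0 := by
      show (if f j = f j then v j else 0) ≠ 0
      rw [if_pos rfl]
      exact ne_zero_of_isRootOfUnity K (hv.1 j)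
    have h2 : mkMat K f' v' (f j) j = 0 := by
      show (if f' j = f j then v' j else 0) = 0
      rw [if_neg (fun h => hne h.symm)]
    rw [hmat] at h1
    exact h1 h2
  subst hff
  have hvv : v = v' := by
    funext j
    have h3 := congrFun (congrFun hmat (f j)) j
    simpa [mkMat] using h3
  subst hvv
  rfl

lemma mkMatPack_surjective (n m : ℕ) : Function.Surjective (mkMatPack K n m) := by
  rintro ⟨D, hRREF, hrank, hRU, hex⟩
  have hchoice : ∀ j, ∃ i, D i j ≠ 0 := fun j => (hex j).exists
  choose fD hfD using hchoice
  have huniq : ∀ j i, D i j ≠ 0 → i = fD j := by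
    intro j i hi
    obtain ⟨i₀, hi₀, hu⟩ := hex j
    rw [hu i hi, hu (fD j) (hfD j)]
  obtain ⟨p, hpm, hp1, hpl, hpc⟩ := hRREF
  have hfp : ∀ i, fD (p i) = i :=
    fun i => (huniq (p i) i (by rw [hp1 i]; exact one_ne_zero)).symm
  have hple : ∀ j, p (fD j) ≤ j := by
    intro j
    by_contra hlt
    push_neg at hlt
    exact hfD j (hpl (fD j) j hlt)
  have hgood : GoodF fD := by
    constructor
    · intro i; exact ⟨p i, hfp i⟩
    · intro j i hij
      refine ⟨p i, lt_of_lt_of_le (hpm hij) (hple j), hfp i⟩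
  have hpivval : ∀ j, IsPivot fD j → D (fD j) j = 1 := by
    intro j hj
    have h1 : p (fD j) = j := by
      rcases lt_or_eq_of_le (hple j) with hlt | heq
      · exact absurd (hfp (fD j)) (hj _ hlt)
      · exact heq
    have h2 := hp1 (fD j)
    rw [h1] at h2
    exact h2
  refine ⟨⟨⟨fD, hgood⟩, ⟨fun j => D (fD j) j, fun j => ?_, hpivval⟩⟩, ?_⟩
  · rcases hRU (fD j) j with h0 | hru
    · exact absurd h0 (hfD j)
    · exact hru
  · apply Subtype.ext
    show mkMat K fD (fun j => D (fD j) j) = D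
    ext i j
    show (if fD j = i then D (fD j) j else 0) = D i j
    by_cases h : fD j = i
    · rw [if_pos h, h]
    · rw [if_neg h]
      by_contra hne
      exact h ((huniq j i fun h' => hne h'.symm).symm)


/-- The number of rank-`m` row-reduced echelon matrices with entries in `μ_K ∪ {0}` and exactly
one nonzero entry in each column is `ω_K^{n−m}·S(n,m)`, with `S(n,m)` the Stirling number of
the second kind. -/
theorem card_Am (m n : ℕ) (hm : 1 ≤ m) (hmn : m ≤ n) :
    Nat.card {D : Matrix (Fin m) (Fin n) K // IsRREF K D ∧ D.rank = m ∧
        (∀ i j, D i j = 0 ∨ IsRootOfUnity K (D i j)) ∧ (∀ j, ∃! i, D i j ≠ 0)} =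
      ωK K ^ (n - m) * stirling2 n m := by
  classical
  haveI : Finite {x : K // IsRootOfUnity K x} := (finite_isRootOfUnity K).to_subtype
  have key := Nat.card_eq_of_bijective (mkMatPack K n m)
    ⟨mkMatPack_injective K n m, mkMatPack_surjective K n m⟩
  rw [← key]
  haveI hWfin : ∀ f : {f : Fin n → Fin m // GoodF f}, Finite (WSet K f.1) := fun f =>
    Finite.of_equiv _ (wEquiv K f.1).symm
  letI : ∀ f : {f : Fin n → Fin m // GoodF f}, Fintype (WSet K f.1) := fun f =>
    Fintype.ofFinite _
  letI : Fintype {f : Fin n → Fin m // GoodF f} := Fintype.ofFinite _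
  rw [Nat.card_eq_fintype_card, Fintype.card_sigma]
  have hW : ∀ f : {f : Fin n → Fin m // GoodF f},
      Fintype.card (WSet K f.1) = ωK K ^ (n - m) := fun f => by
    rw [← Nat.card_eq_fintype_card]
    exact card_WSet K f.2
  rw [Finset.sum_congr rfl fun f _ => hW f, Finset.sum_const, Finset.card_univ, smul_eq_mul]
  have hG : Fintype.card {f : Fin n → Fin m // GoodF f} = stirling2 n m := by
    rw [← Nat.card_eq_fintype_card]
    exact card_goodF n m
  rw [hG]
  exact Nat.mul_comm _ _


end Paper
end
end

section
/- Counting units of bounded shifted height: Let K be a number field of degree d with r₁ real and r₂ complex places, and assume every unit u ∈ O_K^× that is not a root of unity has absolute logarithmic Weil height h(u) ≥ c₀ for some c₀ > 0. Let L : K^× → ℝ^{r₁+r₂} be the logarithmic embedding sending α to (log|σ₁(α)|, …, log|σ_{r₁}(α)|, 2log|σ_{r₁+1}(α)|, …, 2log|σ_{r₁+r₂}(α)|), and define h : ℝ^{r₁+r₂} → ℝ≥0 by h(x) = (1/d)·∑_{j=1}^{r₁+r₂} max(0, x_j). Then for every η ∈ ℝ^{r₁+r₂} with ∑_j η_j =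 Y and every B ≥ 0, #{β ∈ O_K^× : h(η + L(β)) ≤ B} ≤ ω_K · ( (B + c₀/2 + max(0, −Y/d)) / (c₀/2) )^{r₁+r₂−1}. -/
open scoped BigOperators ENNReal NNReal nonZeroDivisors
open MeasureTheory NumberField NumberField.InfinitePlace NumberField.mixedEmbedding

noncomputable section

namespace Paper

attribute [local instance] Classical.propDecidable

set_option linter.unusedSectionVars false
set_option maxHeartbeats 1000000

variable (K : Type*) [Field K] [NumberField K]

/-- The unit rank `r_K = r₁ + r₂ - 1` of `K`. -/
abbrev rK : ℕ := NumberField.Units.rank K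


/-- The logarithmic embedding of `K^×` into `ℝ^{r₁+r₂}` (with a factor of `2` at the complex
places). -/
def logMap (α : K) : InfinitePlace K → ℝ := fun w => (mult w : ℝ) * Real.log (w α)

/-- `h(x) = (1/d)·∑_j max(0, x_j)` on `ℝ^{r₁+r₂}`. -/
def hfun (x : InfinitePlace K → ℝ) : ℝ := (1 / (dK K : ℝ)) * ∑ w, max 0 (x w)

/-! ### Packing lemma -/

open Metric in
lemma packing_count {E : Type*} [NormedAddCommGroup E] [NormedSpace ℝ E] [FiniteDimensional ℝ E]
    {ι : Type*} (s : Finset ι) (f : ι → E) (p : E) {ρ δ : ℝ} (hρ0 : 0 ≤ ρ) (hδ : 0 < δ)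
    (hρ : ∀ i ∈ s, ‖f i - p‖ ≤ ρ)
    (hsep : ∀ i ∈ s, ∀ j ∈ s, i ≠ j → δ ≤ ‖f i - f j‖) :
    (s.card : ℝ) ≤ ((ρ + δ / 2) / (δ / 2)) ^ (Module.finrank ℝ E) := by
  have hδ2 : (0:ℝ) < δ / 2 := by linarith
  have hbase : (1:ℝ) ≤ (ρ + δ / 2) / (δ / 2) := by
    rw [le_div_iff₀ hδ2]; linarith
  rcases subsingleton_or_nontrivial E with hE | hE
  · have h1 : s.card ≤ 1 := by
      refine Finset.card_le_one.2 fun a ha b hb => ?_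
      by_contra hne
      have h2 := hsep a ha b hb hne
      rw [Subsingleton.elim (f a) (f b), sub_self, norm_zero] at h2
      linarith
    calc (s.card : ℝ) ≤ 1 := by exact_mod_cast h1
      _ ≤ _ := one_le_pow₀ hbase
  · borelize E
    set n := Module.finrank ℝ E with hn
    set μ : Measure E := (Module.finBasis ℝ E).addHaar with hμ
    have hdisj : (↑s : Set ι).PairwiseDisjoint (fun i => ball (f i) (δ / 2)) := by
      intro i hi j hj hij
      refine ball_disjoint_ball ?_
      rw [dist_eq_norm]
      linarith [hsep i hi j hj hij]
    have hsub : (⋃ i ∈ s, ball (f i) (δ / 2)) ⊆ closedBall p (ρ + δ / 2) := by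
      intro x hx
      simp only [Set.mem_iUnion] at hx
      obtain ⟨i, hi, hx⟩ := hx
      rw [mem_closedBall]
      calc dist x p ≤ dist x (f i) + dist (f i) p := dist_triangle _ _ _
        _ ≤ δ / 2 + ρ := add_le_add (le_of_lt hx) (by rw [dist_eq_norm]; exact hρ i hi)
        _ = ρ + δ / 2 := by ring
    have hmeas := measure_biUnion_finset (μ := μ) hdisj (fun i _ => measurableSet_ball)
    have hle : ∑ i ∈ s, μ (ball (f i) (δ / 2)) ≤ μ (closedBall p (ρ + δ / 2)) := by
      rw [← hmeas]; exact measure_mono hsub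
    rw [Finset.sum_congr rfl (fun i _ => Measure.addHaar_ball μ (f i) hδ2.le),
      Finset.sum_const, Measure.addHaar_closedBall μ p (by linarith), nsmul_eq_mul,
      ← mul_assoc] at hle
    have hμ0 : μ (ball (0:E) 1) ≠ 0 := (measure_ball_pos μ _ one_pos).ne'
    have hμt : μ (ball (0:E) 1) ≠ ⊤ := measure_ball_lt_top.ne
    have hle2 : (s.card : ℝ≥0∞) * ENNReal.ofReal ((δ/2) ^ n) ≤ ENNReal.ofReal ((ρ + δ/2) ^ n) :=
      (ENNReal.mul_le_mul_iff_left hμ0 hμt).1 hle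
    have hle3 : (s.card : ℝ) * (δ/2) ^ n ≤ (ρ + δ/2) ^ n := by
      rw [← ENNReal.ofReal_natCast s.card, ← ENNReal.ofReal_mul (by positivity)] at hle2
      exact (ENNReal.ofReal_le_ofReal_iff (by positivity)).1 hle2
    rw [div_pow, le_div_iff₀ (by positivity)]
    exact hle3

/-! ### Units and the logarithmic map -/

variable {K}

def lmap (β : (𝓞 K)ˣ) : InfinitePlace K → ℝ := logMap K (algebraMap (𝓞 K) K (β : 𝓞 K))

lemma ne_zero' (β : (𝓞 K)ˣ) : algebraMap (𝓞 K) K (β : 𝓞 K) ≠ 0 :=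
  (map_ne_zero_iff _ RingOfIntegers.coe_injective).mpr (Units.ne_zero β)

lemma wpos (β : (𝓞 K)ˣ) (w : InfinitePlace K) : 0 < w (algebraMap (𝓞 K) K (β : 𝓞 K)) :=
  pos_iff.mpr (ne_zero' β)

lemma lmap_mul (β γ : (𝓞 K)ˣ) : lmap (β * γ) = lmap β + lmap γ := by
  funext w
  have h : algebraMap (𝓞 K) K ((β * γ : (𝓞 K)ˣ) : 𝓞 K)
      = algebraMap (𝓞 K) K (β : 𝓞 K) * algebraMap (𝓞 K) K (γ : 𝓞 K) := by
    rw [Units.val_mul, map_mul]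
  simp only [lmap, logMap, h, Pi.add_apply, map_mul]
  rw [Real.log_mul (wpos β w).ne' (wpos γ w).ne']
  ring

lemma lmap_one : lmap (1 : (𝓞 K)ˣ) = 0 := by
  funext w
  simp [lmap, logMap]

lemma lmap_inv (β : (𝓞 K)ˣ) : lmap β⁻¹ = - lmap β := by
  have h := lmap_mul β β⁻¹
  rw [mul_inv_cancel, lmap_one] at h
  exact eq_neg_of_add_eq_zero_right h.symm

lemma lmap_sum (β : (𝓞 K)ˣ) : ∑ w, lmap β w = 0 := by
  have h := congr_arg Real.log (prod_eq_abs_norm (algebraMap (𝓞 K) K (β : 𝓞 K)))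
  rw [show algebraMap (𝓞 K) K (β : 𝓞 K) = (β : K) from rfl] at h
  rw [Units.norm, Rat.cast_one, Real.log_one, Real.log_prod] at h
  · simp_rw [Real.log_pow] at h
    simpa [lmap, logMap] using h
  · exact fun w _ => pow_ne_zero _ (wpos β w).ne'

lemma lmap_eq_zero_of_torsion {β : (𝓞 K)ˣ} (h : β ∈ NumberField.Units.torsion K) :
    lmap β = 0 := by
  funext w
  have hw := (NumberField.Units.mem_torsion K).mp h w
  simp [lmap, logMap, show w (algebraMap (𝓞 K) K (β : 𝓞 K)) = 1 from hw]

lemma torsion_of_lmap_eq_zero {β : (𝓞 K)ˣ} (h : lmap β = 0) :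
    β ∈ NumberField.Units.torsion K := by
  refine (NumberField.Units.mem_torsion K).mpr fun w => ?_
  have hw := congr_fun h w
  simp only [lmap, logMap, Pi.zero_apply, mul_eq_zero] at hw
  have hmult : ((mult w : ℕ) : ℝ) ≠ 0 := Nat.cast_ne_zero.mpr mult_pos.ne'
  have hlog : Real.log (w (algebraMap (𝓞 K) K (β : 𝓞 K))) = 0 := hw.resolve_left hmult
  have hpos := wpos β w
  rcases Real.log_eq_zero.mp hlog with h0 | h1 | hm
  · exact absurd h0 hpos.ne'
  · exact h1
  · linarith

lemma torsion_iff_isRootOfUnity (β : (𝓞 K)ˣ) :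
    β ∈ NumberField.Units.torsion K ↔ IsRootOfUnity K (algebraMap (𝓞 K) K (β : 𝓞 K)) := by
  constructor
  · intro h
    obtain ⟨n, hn, hpow⟩ := isOfFinOrder_iff_pow_eq_one.mp h
    exact ⟨n, hn, by rw [← map_pow, ← Units.val_pow_eq_pow_val, hpow, Units.val_one, map_one]⟩
  · rintro ⟨n, hn, hpow⟩
    refine isOfFinOrder_iff_pow_eq_one.mpr ⟨n, hn, ?_⟩
    ext
    show algebraMap (𝓞 K) K ((β ^ n : (𝓞 K)ˣ) : 𝓞 K) = algebraMap (𝓞 K) K ((1 : (𝓞 K)ˣ) : 𝓞 K)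
    rw [show ((β ^ n : (𝓞 K)ˣ) : 𝓞 K) = (β : 𝓞 K) ^ n from rfl, map_pow]
    simpa using hpow

lemma omegaK_eq : ωK K = Nat.card (NumberField.Units.torsion K) := by
  refine (Nat.card_congr (Equiv.ofBijective
    (fun u : NumberField.Units.torsion K =>
      (⟨algebraMap (𝓞 K) K ((u : (𝓞 K)ˣ) : 𝓞 K),
        (torsion_iff_isRootOfUnity _).mp u.2⟩ : {x : K // IsRootOfUnity K x}))
    ⟨?_, ?_⟩)).symm
  · intro u v huv
    have h := Subtype.ext_iff.mp huv
    exact Subtype.ext (Units.ext (RingOfIntegers.coe_injective h))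
  · rintro ⟨x, n, hn, hxn⟩
    have hx : IsIntegral ℤ x := by
      refine ⟨Polynomial.X ^ n - Polynomial.C 1, Polynomial.monic_X_pow_sub_C 1 hn.ne', ?_⟩
      simp [hxn]
    set y : 𝓞 K := ⟨x, hx⟩ with hy
    have hcy : algebraMap (𝓞 K) K y = x := rfl
    have hyn : y ^ n = 1 := by
      apply RingOfIntegers.coe_injective
      rw [map_pow, hcy, hxn, map_one]
    have hmul : y * y ^ (n - 1) = 1 := by
      have h1 := pow_succ' y (n - 1)
      rw [Nat.sub_add_cancel hn] at h1
      rw [← h1, hyn]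
    refine ⟨⟨Units.mkOfMulEqOne y _ hmul, ?_⟩, rfl⟩
    refine isOfFinOrder_iff_pow_eq_one.mpr ⟨n, hn, ?_⟩
    ext
    show algebraMap (𝓞 K) K _ = algebraMap (𝓞 K) K _
    rw [Units.val_pow_eq_pow_val, Units.val_mkOfMulEqOne, hyn, Units.val_one]

/-! ### The trace-zero hyperplane with the `ℓ¹` norm -/

variable (K)

def sumLin : PiLp 1 (fun _ : InfinitePlace K => ℝ) →ₗ[ℝ] ℝ where
  toFun x := ∑ w, x w
  map_add' x y := by simp [Finset.sum_add_distrib]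
  map_smul' c x := by simp [Finset.mul_sum]

def VK : Submodule ℝ (PiLp 1 (fun _ : InfinitePlace K => ℝ)) := LinearMap.ker (sumLin K)

lemma finrank_VK : Module.finrank ℝ (VK K) = rK K := by
  have hcard : 0 < Fintype.card (InfinitePlace K) := Fintype.card_pos
  have h1 : LinearMap.range (sumLin K) = ⊤ := by
    rw [LinearMap.range_eq_top]
    intro y
    refine ⟨(WithLp.equiv 1 _).symm (fun _ => y / (Fintype.card (InfinitePlace K))), ?_⟩
    show ∑ _w : InfinitePlace K, (y / (Fintype.card (InfinitePlace K) : ℝ)) = y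
    rw [Finset.sum_const, Finset.card_univ, nsmul_eq_mul]
    field_simp
  have h2 := LinearMap.finrank_range_add_finrank_ker (sumLin K)
  rw [h1, finrank_top, Module.finrank_self] at h2
  have h3 : Module.finrank ℝ (PiLp 1 (fun _ : InfinitePlace K => ℝ))
      = Fintype.card (InfinitePlace K) := by
    exact (WithLp.linearEquiv 1 ℝ (InfinitePlace K → ℝ)).finrank_eq.trans (Module.finrank_pi ℝ)
  rw [h3] at h2
  show Module.finrank ℝ (VK K) = Fintype.card (InfinitePlace K) - 1
  unfold VK
  omega

lemma norm_VK (x : VK K) :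
    ‖x‖ = ∑ w, |(WithLp.equiv 1 _ (x : PiLp 1 (fun _ : InfinitePlace K => ℝ))) w| := by
  rw [Submodule.coe_norm, PiLp.norm_eq_sum (by norm_num)]
  simp [Real.norm_eq_abs]

def fVmap (v : InfinitePlace K → ℝ) : VK K :=
  if h : ∑ w, v w = 0 then
    ⟨(WithLp.equiv 1 (∀ _ : InfinitePlace K, ℝ)).symm v, LinearMap.mem_ker.mpr h⟩
  else 0

lemma fVmap_coe (v : InfinitePlace K → ℝ) (hv : ∑ w, v w = 0) :
    ((fVmap K v : VK K) : PiLp 1 (fun _ : InfinitePlace K => ℝ))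
      = (WithLp.equiv 1 (∀ _ : InfinitePlace K, ℝ)).symm v := by
  rw [fVmap, dif_pos hv]

lemma fVmap_norm_sub (a b : InfinitePlace K → ℝ) (ha : ∑ w, a w = 0) (hb : ∑ w, b w = 0) :
    ‖fVmap K a - fVmap K b‖ = ∑ w, |a w - b w| := by
  rw [norm_VK, Submodule.coe_sub, fVmap_coe K a ha, fVmap_coe K b hb, WithLp.equiv_symm_apply, ← WithLp.toLp_sub]
  simp

/-- Counting units of bounded shifted height: if every non-torsion unit has height at least
`c₀ > 0`, then for `η` with coordinate sum `Y` and `B ≥ 0`,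
`#{β ∈ 𝓞_K^× | h(η + L(β)) ≤ B} ≤ ω_K·((B + c₀/2 + max(0, −Y/d))/(c₀/2))^{r₁+r₂−1}`. -/
theorem count_units_of_bounded_shifted_height (c₀ : ℝ) (hc₀ : 0 < c₀)
    (hbog : ∀ u : (𝓞 K)ˣ, ¬ IsRootOfUnity K (algebraMap (𝓞 K) K (u : 𝓞 K)) →
      c₀ ≤ hfun K (logMap K (algebraMap (𝓞 K) K (u : 𝓞 K))))
    (η : InfinitePlace K → ℝ) (Y : ℝ) (hY : ∑ w, η w = Y) (B : ℝ) (hB : 0 ≤ B) :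
    (Nat.card {β : (𝓞 K)ˣ //
        hfun K (η + logMap K (algebraMap (𝓞 K) K (β : 𝓞 K))) ≤ B} : ℝ) ≤
      (ωK K : ℝ) *
        ((B + c₀ / 2 + max 0 (-Y / (dK K : ℝ))) / (c₀ / 2)) ^ (rK K) := by
  classical
  have hd : (0:ℝ) < (dK K : ℝ) := by exact_mod_cast Module.finrank_pos
  have htc : 0 < Fintype.card (InfinitePlace K) := Fintype.card_pos
  have htr : (0:ℝ) < (Fintype.card (InfinitePlace K) : ℝ) := by exact_mod_cast htc
  have hmaxdiv : ∀ c : ℝ, 0 < c → max 0 (-Y / c) = max 0 (-Y) / c := by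
    intro c hc
    rcases le_total 0 Y with h | h
    · have h1 : -Y / c ≤ 0 := div_nonpos_iff.mpr (Or.inr ⟨by linarith, hc.le⟩)
      rw [max_eq_left h1, max_eq_left (by linarith : -Y ≤ (0:ℝ)), zero_div]
    · have h1 : 0 ≤ -Y / c := div_nonneg (by linarith) hc.le
      rw [max_eq_right h1, max_eq_right (by linarith : (0:ℝ) ≤ -Y)]
  have hmax0 : (0:ℝ) ≤ max 0 (-Y / (dK K : ℝ)) := le_max_left _ _
  have hRHS0 : (0:ℝ) ≤ (ωK K : ℝ) *
      ((B + c₀ / 2 + max 0 (-Y / (dK K : ℝ))) / (c₀ / 2)) ^ (rK K) := by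
    apply mul_nonneg (Nat.cast_nonneg _)
    apply pow_nonneg
    apply div_nonneg (by linarith) (by linarith)
  set A : Set (𝓞 K)ˣ := {β | hfun K (η + lmap β) ≤ B} with hA
  show (Nat.card ↥A : ℝ) ≤ _
  by_cases hfin : A.Finite
  swap
  · rw [Nat.card_coe_set_eq, Set.Infinite.ncard hfin]
    simpa using hRHS0
  have hcard1 : (Nat.card ↥A) = hfin.toFinset.card := by
    rw [Nat.card_coe_set_eq, Set.ncard_eq_toFinset_card _ hfin]
  set F := hfin.toFinset with hF
  have hmemF : ∀ β : (𝓞 K)ˣ, β ∈ F ↔ hfun K (η + lmap β) ≤ B := by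
    intro β; rw [hF, Set.Finite.mem_toFinset]; exact Iff.rfl
  set I := F.image lmap with hI
  have hfinT : ((NumberField.Units.torsion K : Subgroup (𝓞 K)ˣ) : Set (𝓞 K)ˣ).Finite := by
    have hfi : Finite (NumberField.Units.torsion K) := inferInstance
    exact Set.finite_coe_iff.mp hfi
  have hωT : ωK K = hfinT.toFinset.card := by
    rw [omegaK_eq, ← Set.ncard_eq_toFinset_card _ hfinT, ← Nat.card_coe_set_eq]
    rfl
  have hfib : ∀ v ∈ I, (F.filter fun β => lmap β = v).card = ωK K := by
    intro v hv
    obtain ⟨β₀, hβ₀, rfl⟩ := Finset.mem_image.1 hv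
    rw [hωT]
    refine Finset.card_bij' (fun β _ => β * β₀⁻¹) (fun ζ _ => ζ * β₀) ?_ ?_ ?_ ?_
    · intro β hβ
      rw [Finset.mem_filter] at hβ
      rw [Set.Finite.mem_toFinset, SetLike.mem_coe]
      apply torsion_of_lmap_eq_zero
      rw [lmap_mul, lmap_inv, hβ.2]
      abel
    · intro ζ hζ
      rw [Set.Finite.mem_toFinset, SetLike.mem_coe] at hζ
      rw [Finset.mem_filter]
      have h1 : lmap (ζ * β₀) = lmap β₀ := by
        rw [lmap_mul, lmap_eq_zero_of_torsion hζ, zero_add]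
      exact ⟨(hmemF _).mpr (by rw [h1]; exact (hmemF _).mp hβ₀), h1⟩
    · intro β _; exact inv_mul_cancel_right β β₀
    · intro ζ _; exact mul_inv_cancel_right ζ β₀
  have hcard2 : F.card = I.card * ωK K := by
    rw [Finset.card_eq_sum_card_fiberwise (fun β hβ => Finset.mem_image_of_mem lmap hβ),
      Finset.sum_congr rfl hfib, Finset.sum_const, smul_eq_mul]
  have habs : ∀ v : InfinitePlace K → ℝ, ∑ w, v w = 0 →
      ∑ w, |v w| = 2 * ∑ w, max 0 (v w) := by
    intro v hv
    have h1 : ∀ w : InfinitePlace K, |v w| = 2 * max 0 (v w) - v w := by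
      intro w
      rcases le_total 0 (v w) with h | h
      · rw [abs_of_nonneg h, max_eq_right h]; ring
      · rw [abs_of_nonpos h, max_eq_left (by linarith)]; ring
    rw [Finset.sum_congr rfl fun w _ => h1 w, Finset.sum_sub_distrib, hv, sub_zero,
      ← Finset.mul_sum]
  set tc : ℝ := (Fintype.card (InfinitePlace K) : ℝ) with htcdef
  set q : InfinitePlace K → ℝ := fun w => Y / tc - η w with hq
  have hqsum : ∑ w, q w = 0 := by
    rw [hq, Finset.sum_sub_distrib, hY, Finset.sum_const, Finset.card_univ, nsmul_eq_mul]
    field_simp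
    simp [htcdef]
  set ρ : ℝ := 2 * ((dK K : ℝ) * B + max 0 (-Y)) with hρdef
  set δ : ℝ := 2 * (dK K : ℝ) * c₀ with hδdef
  have hρ0 : 0 ≤ ρ := by
    have h0 := le_max_left (0:ℝ) (-Y)
    rw [hρdef]
    nlinarith
  have hδ0 : 0 < δ := by rw [hδdef]; positivity
  have hmaxadd : ∀ a b : ℝ, max 0 (a + b) ≤ max 0 a + max 0 b := fun a b =>
    max_le (add_nonneg (le_max_left 0 a) (le_max_left 0 b))
      (add_le_add (le_max_right 0 a) (le_max_right 0 b))
  have hsum_le : ∀ β : (𝓞 K)ˣ, β ∈ F → ∑ w, max 0 (η w + lmap β w) ≤ (dK K : ℝ) * B := by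
    intro β hβ
    have h1 := (hmemF β).mp hβ
    rw [hfun] at h1
    have h3 := mul_le_mul_of_nonneg_left h1 hd.le
    rw [← mul_assoc, mul_one_div, div_self hd.ne', one_mul] at h3
    simpa [Pi.add_apply] using h3
  have hradius : ∀ v ∈ I, ‖fVmap K v - fVmap K q‖ ≤ ρ := by
    intro v hv
    obtain ⟨β, hβ, rfl⟩ := Finset.mem_image.1 hv
    rw [fVmap_norm_sub K _ q (lmap_sum β) hqsum]
    have hsub0 : ∑ w, (lmap β w - q w) = 0 := by
      rw [Finset.sum_sub_distrib, lmap_sum, hqsum, sub_zero]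
    have h1 : ∑ w, |lmap β w - q w| = 2 * ∑ w, max 0 (lmap β w - q w) := habs _ hsub0
    rw [h1]
    have h2 : ∀ w : InfinitePlace K, max 0 (lmap β w - q w)
        ≤ max 0 (η w + lmap β w) + max 0 (-(Y/tc)) := by
      intro w
      have he : lmap β w - q w = (η w + lmap β w) + (-(Y/tc)) := by rw [hq]; ring
      rw [he]
      exact hmaxadd _ _
    have h4 : tc * max 0 (-(Y/tc)) = max 0 (-Y) := by
      rw [show -(Y/tc) = -Y / tc by ring, hmaxdiv tc htr]
      field_simp
    have h3 : ∑ w, max 0 (lmap β w - q w) ≤ (dK K : ℝ) * B + max 0 (-Y) := by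
      calc ∑ w, max 0 (lmap β w - q w)
          ≤ ∑ w, (max 0 (η w + lmap β w) + max 0 (-(Y/tc))) :=
            Finset.sum_le_sum fun w _ => h2 w
        _ = (∑ w, max 0 (η w + lmap β w)) + tc * max 0 (-(Y/tc)) := by
            rw [Finset.sum_add_distrib, Finset.sum_const, Finset.card_univ, nsmul_eq_mul]
        _ ≤ (dK K : ℝ) * B + max 0 (-Y) := by
            rw [h4]
            exact add_le_add_left (hsum_le β hβ) _
    rw [hρdef]
    linarith
  have hsep : ∀ v ∈ I, ∀ v' ∈ I, v ≠ v' → δ ≤ ‖fVmap K v - fVmap K v'‖ := by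
    intro v hv v' hv' hne
    obtain ⟨β, hβ, rfl⟩ := Finset.mem_image.1 hv
    obtain ⟨γ, hγ, rfl⟩ := Finset.mem_image.1 hv'
    rw [fVmap_norm_sub K _ _ (lmap_sum β) (lmap_sum γ)]
    have hlu : lmap (β * γ⁻¹) = lmap β - lmap γ := by
      rw [lmap_mul, lmap_inv, sub_eq_add_neg]
    have hnt : ¬ IsRootOfUnity K (algebraMap (𝓞 K) K ((β * γ⁻¹ : (𝓞 K)ˣ) : 𝓞 K)) := by
      intro h
      apply hne
      have h0 := lmap_eq_zero_of_torsion ((torsion_iff_isRootOfUnity _).mpr h)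
      rw [hlu] at h0
      exact sub_eq_zero.mp h0
    have hbog' : c₀ ≤ hfun K (lmap (β * γ⁻¹)) := hbog _ hnt
    rw [hlu, hfun] at hbog'
    have h3 : ∑ w, max 0 ((lmap β - lmap γ) w) = ∑ w, max 0 (lmap β w - lmap γ w) := by
      simp [Pi.sub_apply]
    rw [h3] at hbog'
    have h4 := mul_le_mul_of_nonneg_left hbog' hd.le
    rw [← mul_assoc, mul_one_div, div_self hd.ne', one_mul] at h4
    have hsub0 : ∑ w, (lmap β w - lmap γ w) = 0 := by
      rw [Finset.sum_sub_distrib, lmap_sum, lmap_sum, sub_zero]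
    have h1 : ∑ w, |lmap β w - lmap γ w| = 2 * ∑ w, max 0 (lmap β w - lmap γ w) :=
      habs _ hsub0
    rw [h1, hδdef]
    linarith
  have hpack : (I.card : ℝ) ≤ ((ρ + δ/2) / (δ/2)) ^ (Module.finrank ℝ (VK K)) :=
    packing_count I (fVmap K) (fVmap K q) hρ0 hδ0 hradius hsep
  rw [finrank_VK] at hpack
  have hbase : (ρ + δ/2) / (δ/2) = (B + c₀/2 + max 0 (-Y / (dK K : ℝ))) / (c₀/2) := by
    rw [hmaxdiv _ hd, hρdef, hδdef]
    rw [div_eq_div_iff (by positivity) (by positivity)]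
    field_simp
    ring
  rw [hbase] at hpack
  rw [hcard1]
  calc (F.card : ℝ) = (I.card : ℝ) * (ωK K : ℝ) := by exact_mod_cast hcard2
    _ ≤ ((B + c₀/2 + max 0 (-Y / (dK K : ℝ))) / (c₀/2)) ^ (rK K) * (ωK K : ℝ) :=
        mul_le_mul_of_nonneg_right hpack (Nat.cast_nonneg _)
    _ = _ := by ring




end Paper
end
end
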